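/- arXiv:2404.04563 — 9 statements merged into one kernel-verified Lean document; each statement's English description precedes it below -/
import Mathlib

section
/- Let A be a unital C*-algebra and let x ∈ A be self-adjoint. Then the following two conditions are equivalent: (i) σ(xy) ⊆ ℝ for every self-adjoint y ∈ A; (ii) x₊ y x₋ = 0 for every y ∈ A, where x = x₊ − x₋ is the decomposition of x into its positive and negative parts. -/
open scoped ComplexOrder

section AuxSpectrumReal

variable {A : Type*} [CStarAlgebra A]

private lemma aux_eq_zero_of_spectrum_subset {e : A}
    (he : IsSelfAdjoint e) (h : spectrum ℂ e ⊆ {0}) : e = 0 := by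
  have h1 : spectralRadius ℂ e = 0 := by
    rw [spectralRadius]
    refine le_antisymm (iSup₂_le fun k hk => ?_) zero_le
    rcases h hk with rfl
    simp
  have h2 := he.spectralRadius_eq_nnnorm
  rw [h1] at h2
  have : ‖e‖₊ = 0 := by exact_mod_cast h2.symm
  simpa using this

private lemma aux_swap (a b : A) :
    spectrum ℂ (a * b) ⊆ spectrum ℂ (b * a) ∪ {0} := by
  intro k hk
  by_cases hk0 : k = 0
  · exact Or.inr (by simp [hk0])
  · exact Or.inl (Set.mem_of_mem_diff
      (spectrum.nonzero_mul_comm (𝕜 := ℂ) a b ▸ (Set.mem_diff_of_mem hk hk0)))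

private lemma aux_spec_zero : spectrum ℂ (0 : A) ⊆ {0} := by
  intro k hk
  by_contra hk0
  rw [Set.mem_singleton_iff] at hk0
  exact spectrum.mem_iff.mp hk <| by
    simpa using (isUnit_iff_ne_zero.mpr hk0).map (algebraMap ℂ A)

private lemma aux_orth {u v : A} (huv : u * v = 0) (hvu : v * u = 0) :
    spectrum ℂ u ⊆ spectrum ℂ (u + v) ∪ {0} := by
  intro k hk
  by_cases hk0 : k = 0
  · exact Or.inr (by simp [hk0])
  left
  by_contra hmem
  rw [spectrum.notMem_iff] at hmem
  apply spectrum.mem_iff.mp hk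
  set c : A := algebraMap ℂ A k with hc
  have hcu : u * c = c * u := (Algebra.commutes k u).symm
  have hcv : v * c = c * v := (Algebra.commutes k v).symm
  have key : (c - u) * (c - v) = c * (c - (u + v)) := by
    simp only [sub_mul, mul_sub, huv, hcu, mul_add, sub_zero]
    abel
  have key2 : (c - u) * (c - v) = (c - v) * (c - u) := by
    rw [key]
    simp only [sub_mul, mul_sub, hvu, hcu, hcv, mul_add, sub_zero]
    abel
  have hcunit : IsUnit c := (isUnit_iff_ne_zero.mpr hk0).map (algebraMap ℂ A)
  have hunit : IsUnit ((c - u) * (c - v)) := key ▸ hcunit.mul hmem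
  exact ((Commute.isUnit_mul_iff (key2 : Commute (c - u) (c - v))).mp hunit).1

variable [PartialOrder A] [StarOrderedRing A]

private lemma aux_sqrt (x : A) (hx : IsSelfAdjoint x) :
    ∃ a b : A, IsSelfAdjoint a ∧ IsSelfAdjoint b ∧ a * a = x⁺ ∧ b * b = x⁻ ∧
      a * b = 0 ∧ b * a = 0 := by
  have hfc : Continuous fun t : ℝ => Real.sqrt (t ⊔ 0) := by fun_prop
  have hgc : Continuous fun t : ℝ => Real.sqrt (-t ⊔ 0) := by fun_prop
  refine ⟨cfc (fun t : ℝ => Real.sqrt (t ⊔ 0)) x, cfc (fun t : ℝ => Real.sqrt (-t ⊔ 0)) x,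
    cfc_predicate _ x, cfc_predicate _ x, ?_, ?_, ?_, ?_⟩
  · rw [← cfc_mul _ _ x hfc.continuousOn hfc.continuousOn, CFC.posPart_def, cfcₙ_eq_cfc]
    exact cfc_congr fun t _ => by
      rw [Real.mul_self_sqrt (le_max_right t 0)]
      simp [posPart_def]
  · rw [← cfc_mul _ _ x hgc.continuousOn hgc.continuousOn, CFC.negPart_def, cfcₙ_eq_cfc]
    exact cfc_congr fun t _ => by
      rw [Real.mul_self_sqrt (le_max_right (-t) 0)]
      simp [negPart_def]
  · rw [← cfc_mul _ _ x hfc.continuousOn hgc.continuousOn, ← cfc_zero (R := ℝ) (a := x)]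
    exact cfc_congr fun t _ => by
      rcases le_total t 0 with h | h
      · simp [sup_eq_right.mpr h]
      · simp [sup_eq_right.mpr (neg_nonpos.mpr h)]
  · rw [← cfc_mul _ _ x hgc.continuousOn hfc.continuousOn, ← cfc_zero (R := ℝ) (a := x)]
    exact cfc_congr fun t _ => by
      rcases le_total t 0 with h | h
      · simp [sup_eq_right.mpr h]
      · simp [sup_eq_right.mpr (neg_nonpos.mpr h)]

end AuxSpectrumReal

/-- For a self-adjoint element `x` of a unital C*-algebra, the spectrum of `x * y`
is real for every self-adjoint `y` if and only if `x⁺ * y * x⁻ = 0` for every `y`. -/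
theorem spectrum_real_iff_posPart_mul_negPart {A : Type*} [CStarAlgebra A]
    [PartialOrder A] [StarOrderedRing A] (x : A) (hx : IsSelfAdjoint x) :
    (∀ y : A, IsSelfAdjoint y → spectrum ℂ (x * y) ⊆ Set.range (Complex.ofReal)) ↔
      (∀ y : A, x⁺ * y * x⁻ = 0) := by
  obtain ⟨a, b, ha, hb, haa, hbb, hab, hba⟩ := aux_sqrt x hx
  have hab' : ∀ q : A, a * (b * q) = 0 := fun q => by rw [← mul_assoc, hab, zero_mul]
  have hba' : ∀ q : A, b * (a * q) = 0 := fun q => by rw [← mul_assoc, hba, zero_mul]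
  have hx' : x = a * a - b * b := by rw [haa, hbb, CFC.posPart_sub_negPart x hx]
  constructor
  · -- forward direction
    intro h z
    set y : A := a * (z * b) + b * (star z * a) with hy_def
    have hy : IsSelfAdjoint y := by
      simp only [hy_def, IsSelfAdjoint, star_add, star_mul, ha.star_eq, hb.star_eq, star_star]
      rw [add_comm]
      simp [mul_assoc]
    have hspec := h y hy
    set u : A := a * (a * (a * (z * (b * (b * (b * (b * (star z * a)))))))) with hu_def
    set v : A := b * (b * (b * (star z * (a * (a * (a * (a * (z * b)))))))) with hv_def
    have hPP : (x * y) * (x * y) = -(u + v) := by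
      rw [hx', hy_def]
      simp only [mul_add, add_mul, sub_mul, mul_sub, mul_assoc, hab', hba', mul_zero, zero_mul,
        sub_zero, zero_sub, zero_add, add_zero, neg_mul, mul_neg, neg_neg, neg_add_rev]
      rfl
    have huv : u * v = 0 := by
      rw [hu_def, hv_def]
      simp [mul_assoc, hab', hba']
    have hvu : v * u = 0 := by
      rw [hu_def, hv_def]
      simp [mul_assoc, hab', hba']
    -- the spectrum of `u + v` consists of nonpositive reals
    have hsum : spectrum ℂ (u + v) ⊆ {c : ℂ | ∃ r : ℝ, r ≤ 0 ∧ c = r} := by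
      intro k hk
      have h1 : -k ∈ spectrum ℂ ((x * y) ^ 2) := by
        rw [pow_two, hPP, ← spectrum.neg_eq]
        exact Set.neg_mem_neg.mpr hk
      rw [spectrum.map_pow_of_pos (x * y) (by norm_num : 0 < 2)] at h1
      obtain ⟨w, hw, hw2⟩ := h1
      obtain ⟨r, hr⟩ := hspec hw
      refine ⟨-(r ^ 2), neg_nonpos.mpr (sq_nonneg r), ?_⟩
      have : -k = ((r : ℂ)) ^ 2 := by rw [← hw2, ← hr]
      push_cast
      rw [← this]
      ring
    have husub : spectrum ℂ u ⊆ spectrum ℂ (u + v) ∪ {0} := aux_orth huv hvu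
    -- relate `u` to `w₀ * star w₀` where `w₀ = x⁺ * z * x⁻`
    set w₀ : A := x⁺ * z * x⁻ with hw₀_def
    set B : A := a * (a * (z * (b * (b * (b * (b * star z)))))) with hB_def
    set U₁ : A := a * (a * (a * (z * (b * (b * (b * (b * star z))))))) with hU₁_def
    have hw₀B : w₀ * star w₀ = B * (a * a) := by
      rw [hw₀_def, hB_def, ← haa, ← hbb]
      simp only [star_mul, ha.star_eq, hb.star_eq, star_star]
      simp [mul_assoc]
    have hn : a * a * B = a * U₁ := by rw [hU₁_def, hB_def]; simp [mul_assoc]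
    have hU₁a : U₁ * a = u := by rw [hU₁_def, hu_def]; simp [mul_assoc]
    have hw₀spec : spectrum ℂ (w₀ * star w₀) ⊆ {0} := by
      intro k hk
      rw [hw₀B] at hk
      rcases aux_swap B (a * a) hk with hk1 | hk1
      swap
      · exact hk1
      rw [hn] at hk1
      rcases aux_swap a U₁ hk1 with hk2 | hk2
      swap
      · exact hk2
      rw [hU₁a] at hk2
      rcases husub hk2 with hk3 | hk3
      swap
      · exact hk3
      obtain ⟨r, hr, hkr⟩ := hsum hk3
      have hpos : (0 : ℂ) ≤ k :=
        spectrum_nonneg_of_nonneg (mul_star_self_nonneg w₀) (by rwa [hw₀B] : k ∈ spectrum ℂ (w₀ * star w₀))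
      rw [hkr] at hpos ⊢
      have : (0 : ℝ) ≤ r := by exact_mod_cast hpos
      simp [le_antisymm hr this]
    have hzero : w₀ * star w₀ = 0 :=
      aux_eq_zero_of_spectrum_subset (IsSelfAdjoint.mul_star_self w₀) hw₀spec
    exact (CStarRing.mul_star_self_eq_zero_iff w₀).mp hzero
  · -- reverse direction
    intro h y hy
    have h' : ∀ z : A, x⁺ * (z * x⁻) = 0 := fun z => by rw [← mul_assoc]; exact h z
    have key : ∀ z : A, a * (z * b) = 0 := by
      intro z
      set t : A := a * (z * b) with ht_def
      have he : IsSelfAdjoint (star t * t) := IsSelfAdjoint.star_mul_self t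
      have heq : star t * t = b * (star z * (x⁺ * (z * b))) := by
        rw [ht_def, ← haa]
        simp only [star_mul, ha.star_eq, hb.star_eq, star_star]
        simp [mul_assoc]
      have hzero : (star z * (x⁺ * (z * b))) * b = 0 := by
        simp only [mul_assoc, hbb]
        rw [h' (z)]
        simp
      have hsub : spectrum ℂ (star t * t) ⊆ {0} := by
        rw [heq]
        refine (aux_swap b _).trans ?_
        rw [hzero]
        exact Set.union_subset aux_spec_zero subset_rfl
      have := aux_eq_zero_of_spectrum_subset he hsub
      exact (CStarRing.star_mul_self_eq_zero_iff t).mp this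
    have key2 : ∀ z : A, b * (z * a) = 0 := by
      intro z
      have := congrArg star (key (star z))
      simpa only [star_mul, star_star, star_zero, ha.star_eq, hb.star_eq, mul_assoc] using this
    have hfact0 : (a - b) * (a + b) = x := by
      rw [hx', sub_mul, mul_add, mul_add, hab, hba, add_zero, zero_add]
    have hfact : (a - b) * ((a + b) * y) = x * y := by
      rw [← mul_assoc, hfact0]
    have hm : (a + b) * (y * (a - b)) = a * (y * a) - b * (y * b) := by
      rw [mul_sub, add_mul, mul_sub, mul_sub, key y, key2 y, sub_zero, zero_sub]
      abel
    have hmsa : IsSelfAdjoint (a * (y * a) - b * (y * b)) := by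
      simp only [IsSelfAdjoint, star_sub, star_mul, ha.star_eq, hb.star_eq, hy.star_eq]
      simp [mul_assoc]
    intro k hk
    rw [← hfact] at hk
    rcases aux_swap (a - b) ((a + b) * y) hk with hk' | hk'
    · rw [mul_assoc, hm] at hk'
      exact ⟨k.re, (hmsa.mem_spectrum_eq_re hk').symm⟩
    · exact ⟨0, by simpa using hk'.symm⟩
end

section
/- Let A be a unital C*-algebra and let a, b ∈ A be self-adjoint elements such that σ(ay) = σ(by) for every positive invertible y ∈ A. Let x ∈ A be self-adjoint and let λ be a real number with |λ| > ‖x‖. Then λ ∈ σ(x + a) if and only if λ ∈ σ(x + b). -/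
lemma pos_inv_aux {A : Type*} [CStarAlgebra A] [PartialOrder A] [StarOrderedRing A] [Nontrivial A]
    (x : A) (hx : IsSelfAdjoint x) (lam : ℝ) (hlam : ‖x‖ < lam) :
    0 ≤ algebraMap ℝ A lam - x ∧ IsUnit (algebraMap ℝ A lam - x) := by
  have hsa : IsSelfAdjoint (algebraMap ℝ A lam - x) :=
    (IsSelfAdjoint.algebraMap A (IsSelfAdjoint.all lam)).sub hx
  constructor
  · rw [StarOrderedRing.nonneg_iff_spectrum_nonneg (R := ℝ) _ hsa]
    intro t ht
    rw [← spectrum.singleton_sub_eq] at ht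
    obtain ⟨s, hs, t', ht', rfl⟩ := ht
    have h2 : |t'| ≤ ‖x‖ := by simpa using spectrum.norm_le_norm_of_mem ht'
    simp only [Set.mem_singleton_iff] at hs
    subst hs
    show (0:ℝ) ≤ s - t'
    linarith [abs_le.mp h2 |>.2]
  · rw [← spectrum.notMem_iff]
    intro hmem
    have h2 : |lam| ≤ ‖x‖ := by simpa using spectrum.norm_le_norm_of_mem hmem
    linarith [abs_le.mp h2 |>.1, le_abs_self lam]

lemma key_aux {A : Type*} [CStarAlgebra A] [PartialOrder A] [StarOrderedRing A] [Nontrivial A]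
    (x : A) (hx : IsSelfAdjoint x) (lam : ℝ) (hlam : ‖x‖ < |lam|) :
    ∃ (y : A) (μ : ℂ), 0 ≤ y ∧ IsUnit y ∧
      ∀ c : A, ((lam : ℂ) ∈ spectrum ℂ (x + c) ↔ μ ∈ spectrum ℂ (c * y)) := by
  have hmap : (algebraMap ℂ A) ((lam : ℝ) : ℂ) = algebraMap ℝ A lam := by
    rw [IsScalarTower.algebraMap_apply ℝ ℂ A]; norm_cast
  rcases lt_or_ge 0 lam with hpos | hneg
  · rw [abs_of_pos hpos] at hlam
    obtain ⟨h0, hu⟩ := pos_inv_aux x hx lam hlam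
    obtain ⟨v, hv⟩ := hu
    rw [← hv] at h0
    refine ⟨↑v⁻¹, 1, CFC.inv_nonneg_of_nonneg v h0, v⁻¹.isUnit, fun c => ?_⟩
    rw [spectrum.mem_iff, spectrum.mem_iff]
    have e1 : (algebraMap ℂ A) ((lam : ℝ) : ℂ) - (x + c) = (1 - c * ↑v⁻¹) * ↑v := by
      rw [sub_mul, one_mul, mul_assoc, v.inv_mul, mul_one, hv, hmap]
      abel
    have e2 : (algebraMap ℂ A) (1 : ℂ) - c * ↑v⁻¹ = 1 - c * ↑v⁻¹ := by simp
    rw [e1, e2, Units.isUnit_mul_units]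
  · have hneg' : lam < 0 := by
      rcases lt_or_eq_of_le hneg with h | h
      · exact h
      · exfalso; subst h; simp at hlam; linarith [norm_nonneg x]
    rw [abs_of_neg hneg'] at hlam
    obtain ⟨h0, hu⟩ := pos_inv_aux (-x) hx.neg (-lam) (by simpa using hlam)
    have heq : algebraMap ℝ A (-lam) - (-x) = x - algebraMap ℝ A lam := by
      rw [map_neg]; abel
    rw [heq] at h0 hu
    obtain ⟨v, hv⟩ := hu
    rw [← hv] at h0
    refine ⟨↑v⁻¹, -1, CFC.inv_nonneg_of_nonneg v h0, v⁻¹.isUnit, fun c => ?_⟩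
    rw [spectrum.mem_iff, spectrum.mem_iff]
    have e1 : (algebraMap ℂ A) ((lam : ℝ) : ℂ) - (x + c) = -((1 + c * ↑v⁻¹) * ↑v) := by
      rw [add_mul, one_mul, mul_assoc, v.inv_mul, mul_one, hv, hmap]
      abel
    have e2 : (algebraMap ℂ A) (-1 : ℂ) - c * ↑v⁻¹ = -(1 + c * ↑v⁻¹) := by simp; abel
    rw [e1, e2, IsUnit.neg_iff, IsUnit.neg_iff, Units.isUnit_mul_units]

/-- If `a, b` are self-adjoint with `σ(a y) = σ(b y)` for every positive invertible
`y`, and `x` is self-adjoint with `|λ| > ‖x‖`, then `λ ∈ σ(x + a) ↔ λ ∈ σ(x + b)`. -/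
theorem mem_spectrum_add_iff_of_spectrum_mul_eq {A : Type*} [CStarAlgebra A]
    [PartialOrder A] [StarOrderedRing A] (a b : A)
    (ha : IsSelfAdjoint a) (hb : IsSelfAdjoint b)
    (h : ∀ y : A, 0 ≤ y → IsUnit y → spectrum ℂ (a * y) = spectrum ℂ (b * y))
    (x : A) (hx : IsSelfAdjoint x) (lam : ℝ) (hlam : ‖x‖ < |lam|) :
    (lam : ℂ) ∈ spectrum ℂ (x + a) ↔ (lam : ℂ) ∈ spectrum ℂ (x + b) := by
  rcases subsingleton_or_nontrivial A with hA | hA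
  · simp [spectrum.mem_iff, isUnit_of_subsingleton]
  · obtain ⟨y, μ, hy0, hyu, hkey⟩ := key_aux x hx lam hlam
    rw [hkey a, hkey b, h y hy0 hyu]
end

section
/- Let A be a unital C*-algebra and let a, b ∈ A be self-adjoint elements. If σ(ay) = σ(by) for every positive invertible y ∈ A, then a = b. -/
open scoped ComplexOrder

section Auxiliary

variable {A : Type*} [CStarAlgebra A] [PartialOrder A] [StarOrderedRing A]


lemma sqrt_mul_sqrt_eq_zero_of_anticomm (s e : A) (hs : 0 ≤ s) (he : 0 ≤ e)
    (h : s * e + e * s ≤ 0) : CFC.sqrt s * CFC.sqrt e = 0 := by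
  set p := CFC.sqrt e with hp_def
  set r := CFC.sqrt s with hr_def
  have hp : 0 ≤ p := CFC.sqrt_nonneg _
  have hr : 0 ≤ r := CFC.sqrt_nonneg _
  have hpp : p * p = e := CFC.sqrt_mul_sqrt_self e he
  have hrr : r * r = s := CFC.sqrt_mul_sqrt_self s hs
  have hp_star : star p = p := hp.isSelfAdjoint.star_eq
  have hr_star : star r = r := hr.isSelfAdjoint.star_eq
  set m := p * s * p with hm_def
  have hm : 0 ≤ m := by
    simpa [hp_star] using star_left_conjugate_nonneg hs p
  -- spectrum of s*e is contained in {0}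
  have hspec : ∀ z ∈ spectrum ℂ (s * e), z = 0 := by
    intro z hz
    by_contra hz0
    have hzm : z ∈ spectrum ℂ m := by
      have hswap := spectrum.nonzero_mul_comm (𝕜 := ℂ) (s * p) p
      have h1 : (s * p) * p = s * e := by rw [mul_assoc, hpp]
      have h2 : p * (s * p) = m := by rw [hm_def, mul_assoc]
      rw [h1, h2] at hswap
      have hmem : z ∈ spectrum ℂ m \ {0} := by rw [← hswap]; exact ⟨hz, hz0⟩
      exact hmem.1
    have hznn : 0 ≤ z := spectrum_nonneg_of_nonneg hm hzm
    rw [Complex.nonneg_iff] at hznn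
    obtain ⟨t, ht_pos, rfl⟩ : ∃ t : ℝ, 0 < t ∧ z = (t : ℂ) := by
      refine ⟨z.re, ?_, Complex.ext (by simp) (by simp [← hznn.2])⟩
      rcases lt_or_eq_of_le hznn.1 with h' | h'
      · exact h'
      · exact absurd (Complex.ext h'.symm hznn.2.symm) hz0
    set g : A := algebraMap ℝ A t - (1/2 : ℝ) • (s * e + e * s) with hg_def
    set k : A := (1/2 : ℝ) • (s * e - e * s) with hk_def
    have hg_sa : IsSelfAdjoint g := by
      rw [IsSelfAdjoint, hg_def]
      simp only [star_sub, star_smul, star_add, star_mul, hs.isSelfAdjoint.star_eq,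
        he.isSelfAdjoint.star_eq, star_trivial]
      rw [add_comm (e*s) (s*e)]
      congr 1
      exact (IsSelfAdjoint.algebraMap A (IsSelfAdjoint.all t)).star_eq
    have hg_ge : algebraMap ℝ A t ≤ g := by
      have h2 : (0:A) ≤ -((1/2 : ℝ) • (s * e + e * s)) := by
        rw [← smul_neg]
        exact smul_nonneg (by norm_num) (neg_nonneg.mpr h)
      calc algebraMap ℝ A t = algebraMap ℝ A t + 0 := by rw [add_zero]
        _ ≤ algebraMap ℝ A t + -((1/2:ℝ) • (s*e+e*s)) := add_le_add_right h2 _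
        _ = g := by rw [hg_def, sub_eq_add_neg]
    have halg_nonneg : (0:A) ≤ algebraMap ℝ A t := by
      have hc : algebraMap ℝ A t = star (algebraMap ℝ A (Real.sqrt t)) * algebraMap ℝ A (Real.sqrt t) := by
        rw [(IsSelfAdjoint.algebraMap A (IsSelfAdjoint.all _)).star_eq, ← map_mul,
          Real.mul_self_sqrt ht_pos.le]
      rw [hc]
      exact star_mul_self_nonneg _
    have hg_nonneg : 0 ≤ g := le_trans halg_nonneg hg_ge
    have hg_unit : IsUnit g := by
      rw [← spectrum.zero_notMem_iff ℝ]
      intro h0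
      have := (algebraMap_le_iff_le_spectrum (ha := hg_sa)).mp hg_ge 0 h0
      linarith
    set q := CFC.sqrt g with hq_def
    have hq : 0 ≤ q := CFC.sqrt_nonneg _
    have hqq : q * q = g := CFC.sqrt_mul_sqrt_self g hg_nonneg
    have hq_star : star q = q := hq.isSelfAdjoint.star_eq
    set x : A := ↑hg_unit.unit⁻¹ * q with hx_def
    have hcommu : Commute q ↑hg_unit.unit⁻¹ := by
      refine Commute.units_inv_right ?_
      rw [Commute, SemiconjBy, hg_unit.unit_spec, ← hqq]
      noncomm_ring
    have hqx : q * x = 1 := by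
      rw [hx_def, ← mul_assoc, hcommu.eq, mul_assoc, hqq]
      exact hg_unit.val_inv_mul
    have hxq : x * q = 1 := by
      rw [hx_def, mul_assoc, hqq]
      exact hg_unit.val_inv_mul
    have hx_star : star x = x := by
      have h1 : star x * q = 1 := by
        rw [← hq_star, ← star_mul, hqx, star_one]
      calc star x = star x * (q * x) := by rw [hqx, mul_one]
        _ = (star x * q) * x := by rw [mul_assoc]
        _ = x := by rw [h1, one_mul]
    have hk_skew : star k = -k := by
      rw [hk_def, star_smul]
      simp only [star_sub, star_mul, hs.isSelfAdjoint.star_eq, he.isSelfAdjoint.star_eq,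
        star_trivial]
      rw [← smul_neg]
      congr 1
      abel
    set z₀ : A := x * k * x with hz₀_def
    have hz₀_skew : star z₀ = -z₀ := by
      have h1 : star z₀ = x * star k * x := by
        simp only [hz₀_def, star_mul, hx_star, mul_assoc]
      rw [h1, hk_skew, mul_neg, neg_mul]
    set v : A := Complex.I • z₀ with hv_def
    have hv_sa : IsSelfAdjoint v := by
      rw [hv_def, IsSelfAdjoint, star_smul, hz₀_skew]
      simp [Complex.conj_I]
    have hI_not : (Complex.I : ℂ) ∉ spectrum ℂ v := by
      intro hI
      rw [← hv_sa.spectrumRestricts.algebraMap_image] at hI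
      obtain ⟨r', -, hr'⟩ := hI
      simpa using congrArg Complex.im hr'
    have hIu : IsUnit (algebraMap ℂ A Complex.I - v) := by
      rw [spectrum.mem_iff, not_not] at hI_not
      exact hI_not
    have h1z : IsUnit (1 - z₀) := by
      have heq : (1 : A) - z₀ = algebraMap ℂ A (-Complex.I) * (algebraMap ℂ A Complex.I - v) := by
        rw [mul_sub, ← map_mul, hv_def, Algebra.smul_def, ← mul_assoc, ← map_mul]
        simp [Complex.I_mul_I]
      rw [heq]
      exact ((algebraMap ℂ A).isUnit_map (by simp [isUnit_iff_ne_zero])).mul hIu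
    have hfact : algebraMap ℂ A (t : ℂ) - s * e = q * (1 - z₀) * q := by
      have expand : q * (1 - z₀) * q = g - k := by
        rw [mul_sub, sub_mul, mul_one, hqq, hz₀_def]
        congr 1
        calc q * (x * k * x) * q = (q * x) * k * (x * q) := by noncomm_ring
          _ = k := by rw [hqx, hxq, one_mul, mul_one]
      rw [expand, hg_def, hk_def]
      have halg : algebraMap ℂ A (t : ℂ) = algebraMap ℝ A t := by
        rw [IsScalarTower.algebraMap_apply ℝ ℂ A, Complex.coe_algebraMap]
      rw [halg, sub_sub]
      congr 1
      module
    have : IsUnit (algebraMap ℂ A (t : ℂ) - s * e) := by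
      rw [hfact]
      have hqU : IsUnit q := isUnit_iff_exists.mpr ⟨x, hqx, hxq⟩
      exact (hqU.mul h1z).mul hqU
    rw [spectrum.mem_iff] at hz
    exact hz this
  have hm_sa : IsSelfAdjoint m := hm.isSelfAdjoint
  have hm_spec : ∀ x ∈ spectrum ℝ m, x = 0 := by
    intro x hx
    have hxc : (x : ℂ) ∈ spectrum ℂ m := (IsSelfAdjoint.coe_mem_spectrum_complex hm_sa).mpr hx
    by_cases hx0 : (x : ℂ) = 0
    · exact_mod_cast hx0
    · have hswap := spectrum.nonzero_mul_comm (𝕜 := ℂ) (s * p) p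
      have h1 : (s * p) * p = s * e := by rw [mul_assoc, hpp]
      have h2 : p * (s * p) = m := by rw [hm_def, mul_assoc]
      rw [h1, h2] at hswap
      have hmem : (x:ℂ) ∈ spectrum ℂ (s * e) \ {0} := by rw [hswap]; exact ⟨hxc, hx0⟩
      exact absurd (hspec _ hmem.1) hx0
  have hm_le : m ≤ 0 := by
    have := (le_algebraMap_iff_spectrum_le (r := (0:ℝ)) (ha := hm_sa)).mpr
      (fun x hx => le_of_eq (hm_spec x hx))
    simpa using this
  have hm0 : m = 0 := le_antisymm hm_le hm
  have : star (r * p) * (r * p) = 0 := by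
    rw [star_mul, hp_star, hr_star]
    calc p * r * (r * p) = p * (r * r) * p := by noncomm_ring
      _ = m := by rw [hrr]
      _ = 0 := hm0
  exact (CStarRing.star_mul_self_eq_zero_iff _).mp this


lemma le_posPart_of_spectrum_mul_eq (a b : A)
    (ha : IsSelfAdjoint a) (hb : IsSelfAdjoint b)
    (h : ∀ y : A, 0 ≤ y → IsUnit y → spectrum ℂ (a * y) = spectrum ℂ (b * y)) :
    b ≤ a⁺ := by
  have key : ∀ δ : ℝ, 0 < δ → b ≤ cfc (fun t : ℝ => max t 0 + δ) a := by
    intro δ hδ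
    set f : ℝ → ℝ := fun t => max t 0 + δ with hf_def
    have hf_cont : Continuous f := (continuous_id.max continuous_const).add continuous_const
    have hf_pos : ∀ t, 0 < f t := fun t =>
      add_pos_of_nonneg_of_pos (le_max_right t 0) hδ
    set g : ℝ → ℝ := fun t => (Real.sqrt (f t))⁻¹ with hg_def
    have hfs_pos : ∀ t, 0 < Real.sqrt (f t) := fun t => Real.sqrt_pos.mpr (hf_pos t)
    have hg_cont : Continuous g :=
      (Real.continuous_sqrt.comp hf_cont).inv₀ (fun t => (hfs_pos t).ne')
    have hg'_cont : Continuous (fun t => Real.sqrt (f t)) := Real.continuous_sqrt.comp hf_cont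
    set r := cfc g a with hr_def
    set r' := cfc (fun t => Real.sqrt (f t)) a with hr'_def
    set w := cfc f a with hw_def
    have hrr' : r * r' = 1 := by
      rw [hr_def, hr'_def, ← cfc_mul _ _ a hg_cont.continuousOn hg'_cont.continuousOn]
      calc cfc (fun t => g t * Real.sqrt (f t)) a = cfc (1 : ℝ → ℝ) a := by
            apply cfc_congr; intro t _
            simp only [hg_def, Pi.one_apply]
            rw [inv_mul_cancel₀ (hfs_pos t).ne']
        _ = 1 := cfc_one ℝ a
    have hr'r : r' * r = 1 := by
      rw [hr_def, hr'_def, ← cfc_mul _ _ a hg'_cont.continuousOn hg_cont.continuousOn]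
      calc cfc (fun t => Real.sqrt (f t) * g t) a = cfc (1 : ℝ → ℝ) a := by
            apply cfc_congr; intro t _
            simp only [hg_def, Pi.one_apply]
            rw [mul_inv_cancel₀ (hfs_pos t).ne']
        _ = 1 := cfc_one ℝ a
    have hr0 : 0 ≤ r := cfc_nonneg (fun t _ => by positivity)
    have hr'0 : 0 ≤ r' := cfc_nonneg (fun t _ => Real.sqrt_nonneg _)
    have hr_star : star r = r := hr0.isSelfAdjoint.star_eq
    have hr'_star : star r' = r' := hr'0.isSelfAdjoint.star_eq
    have ha_le_w : a ≤ w := by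
      calc a = cfc (fun t : ℝ => t) a := (cfc_id' ℝ a ha).symm
        _ ≤ w := cfc_mono (fun t _ => le_add_of_le_of_nonneg (le_max_left t 0) hδ.le)
    have hrwr : r * w * r = 1 := by
      rw [hr_def, hw_def, ← cfc_mul _ _ a hg_cont.continuousOn hf_cont.continuousOn,
        ← cfc_mul (fun t => g t * f t) _ a (hg_cont.mul hf_cont).continuousOn hg_cont.continuousOn]
      calc cfc (fun t => g t * f t * g t) a = cfc (1 : ℝ → ℝ) a := by
            apply cfc_congr; intro t _
            simp only [hg_def, Pi.one_apply]
            rw [show (Real.sqrt (f t))⁻¹ * f t * (Real.sqrt (f t))⁻¹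
                = f t / (Real.sqrt (f t) * Real.sqrt (f t)) by ring,
              Real.mul_self_sqrt (hf_pos t).le, div_self (hf_pos t).ne']
        _ = 1 := cfc_one ℝ a
    have hr'r' : r' * r' = w := by
      rw [hr'_def, hw_def, ← cfc_mul _ _ a hg'_cont.continuousOn hg'_cont.continuousOn]
      apply cfc_congr; intro t _
      exact Real.mul_self_sqrt (hf_pos t).le
    -- apply the hypothesis with y = r * r
    set u : Aˣ := ⟨r, r', hrr', hr'r⟩ with hu_def
    have hrU : IsUnit r := ⟨u, rfl⟩
    have hy0 : 0 ≤ r * r := by nth_rw 1 [← hr_star]; exact star_mul_self_nonneg r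
    have hyU : IsUnit (r * r) := hrU.mul hrU
    have hspec := h (r * r) hy0 hyU
    have hconj_a : spectrum ℂ (r * a * r) = spectrum ℂ (a * (r * r)) := by
      have heq : r * a * r = ↑u * (a * (r * r)) * ↑u⁻¹ := by
        have : (↑u⁻¹ : A) = r' := rfl
        rw [this, show (↑u : A) = r from rfl]
        calc r * a * r = r * a * r * 1 := by rw [mul_one]
          _ = r * a * r * (r * r') := by rw [hrr']
          _ = r * (a * (r * r)) * r' := by noncomm_ring
      rw [heq, spectrum.units_conjugate]
    have hconj_b : spectrum ℂ (r * b * r) = spectrum ℂ (b * (r * r)) := by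
      have heq : r * b * r = ↑u * (b * (r * r)) * ↑u⁻¹ := by
        have : (↑u⁻¹ : A) = r' := rfl
        rw [this, show (↑u : A) = r from rfl]
        calc r * b * r = r * b * r * 1 := by rw [mul_one]
          _ = r * b * r * (r * r') := by rw [hrr']
          _ = r * (b * (r * r)) * r' := by noncomm_ring
      rw [heq, spectrum.units_conjugate]
    have hspec' : spectrum ℂ (r * a * r) = spectrum ℂ (r * b * r) := by
      rw [hconj_a, hconj_b, hspec]
    -- r * a * r ≤ 1
    have hrar_sa : IsSelfAdjoint (r * a * r) := by
      rw [IsSelfAdjoint]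
      simp only [star_mul, hr_star, ha.star_eq, mul_assoc]
    have hrbr_sa : IsSelfAdjoint (r * b * r) := by
      rw [IsSelfAdjoint]
      simp only [star_mul, hr_star, hb.star_eq, mul_assoc]
    have hrar_le : r * a * r ≤ 1 := by
      have := star_left_conjugate_le_conjugate ha_le_w r
      rwa [hr_star, hrwr] at this
    have hrbr_le : r * b * r ≤ 1 := by
      rw [CFC.le_one_iff (R := ℝ) _ hrbr_sa]
      intro x hx
      have hxc : (x : ℂ) ∈ spectrum ℂ (r * a * r) := by
        rw [hspec']
        exact (IsSelfAdjoint.coe_mem_spectrum_complex hrbr_sa).mpr hx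
      have hxr : x ∈ spectrum ℝ (r * a * r) :=
        (IsSelfAdjoint.coe_mem_spectrum_complex hrar_sa).mp hxc
      exact (CFC.le_one_iff (R := ℝ) _ hrar_sa).mp hrar_le x hxr
    -- conjugate back
    have := star_left_conjugate_le_conjugate hrbr_le r'
    rw [hr'_star, mul_one, hr'r'] at this
    calc b = (r' * r) * b * (r * r') := by rw [hr'r, hrr', one_mul, mul_one]
      _ = r' * (r * b * r) * r' := by noncomm_ring
      _ ≤ w := this
  -- now take δ → 0
  have hps : a⁺ = cfc (fun t : ℝ => max t 0) a := by
    rw [CFC.posPart_def, cfcₙ_eq_cfc]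
    apply cfc_congr; intro t _
    simp [_root_.posPart_def]
  have hz_sa : IsSelfAdjoint (b - a⁺) := hb.sub (CFC.posPart_nonneg a).isSelfAdjoint
  have hz_le : ∀ x ∈ spectrum ℝ (b - a⁺), x ≤ 0 := by
    intro x hx
    by_contra hx0
    push_neg at hx0
    have hb_le := key (x / 2) (by linarith)
    have hsplit : cfc (fun t : ℝ => max t 0 + x/2) a = a⁺ + algebraMap ℝ A (x/2) := by
      rw [cfc_add (a := a) (f := fun t => max t 0) (g := fun _ => x/2)
        ((continuous_id.max continuous_const).continuousOn) continuousOn_const,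
        cfc_const _ a ha, hps]
    rw [hsplit, ← sub_le_iff_le_add'] at hb_le
    have := (le_algebraMap_iff_spectrum_le (ha := hz_sa)).mp (by
      rwa [sub_eq_add_neg, add_comm, ← sub_eq_neg_add] at hb_le) x hx
    linarith
  have : b - a⁺ ≤ algebraMap ℝ A 0 := (le_algebraMap_iff_spectrum_le (ha := hz_sa)).mpr hz_le
  rw [map_zero, sub_nonpos] at this
  exact this



lemma sqrt_posPart_conj (b : A) (hb : IsSelfAdjoint b) :
    CFC.sqrt b⁺ * b * CFC.sqrt b⁺ = b⁺ * b⁺ := by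
  set q := CFC.sqrt b⁺ with hq_def
  have hq : 0 ≤ q := CFC.sqrt_nonneg _
  have hqq : q * q = b⁺ := CFC.sqrt_mul_sqrt_self b⁺ (CFC.posPart_nonneg b)
  have hq_star : star q = q := hq.isSelfAdjoint.star_eq
  have hneg_star : star b⁻ = b⁻ := (CFC.negPart_nonneg b).isSelfAdjoint.star_eq
  have hqneg : q * b⁻ = 0 := by
    have h0 : star (q * b⁻) * (q * b⁻) = 0 := by
      rw [star_mul, hq_star, hneg_star]
      calc b⁻ * q * (q * b⁻) = b⁻ * (q * q) * b⁻ := by noncomm_ring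
        _ = b⁻ * b⁺ * b⁻ := by rw [hqq]
        _ = 0 := by rw [CFC.negPart_mul_posPart, zero_mul]
    exact (CStarRing.star_mul_self_eq_zero_iff _).mp h0
  calc q * b * q = q * (b⁺ - b⁻) * q := by rw [CFC.posPart_sub_negPart b hb]
    _ = q * b⁺ * q - (q * b⁻) * q := by noncomm_ring
    _ = q * (q * q) * q - 0 * q := by rw [hqq, hqneg]
    _ = (q * q) * (q * q) := by noncomm_ring
    _ = b⁺ * b⁺ := by rw [hqq]

lemma posPart_eq_posPart_of_le (a b : A) (ha : IsSelfAdjoint a) (hb : IsSelfAdjoint b)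
    (h1 : b ≤ a⁺) (h2 : a ≤ b⁺) : a⁺ = b⁺ := by
  set x := a⁺ with hx_def
  set y := b⁺ with hy_def
  have hx : 0 ≤ x := CFC.posPart_nonneg a
  have hy : 0 ≤ y := CFC.posPart_nonneg b
  have hx_star : star x = x := hx.isSelfAdjoint.star_eq
  have hy_star : star y = y := hy.isSelfAdjoint.star_eq
  set qx := CFC.sqrt x with hqx_def
  set qy := CFC.sqrt y with hqy_def
  have hqx : 0 ≤ qx := CFC.sqrt_nonneg _
  have hqy : 0 ≤ qy := CFC.sqrt_nonneg _
  have hqx_star : star qx = qx := hqx.isSelfAdjoint.star_eq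
  have hqy_star : star qy = qy := hqy.isSelfAdjoint.star_eq
  have hqxx : qx * qx = x := CFC.sqrt_mul_sqrt_self x hx
  have hqyy : qy * qy = y := CFC.sqrt_mul_sqrt_self y hy
  -- y*y*y ≤ y*x*y
  have hy3 : y * y * y ≤ y * x * y := by
    have c1 := star_left_conjugate_le_conjugate h1 qy
    rw [hqy_star, sqrt_posPart_conj b hb] at c1
    -- c1 : y * y ≤ qy * x * qy
    have c2 := star_left_conjugate_le_conjugate c1 qy
    rw [hqy_star] at c2
    calc y * y * y = qy * (y * y) * qy := by rw [← hqyy]; noncomm_ring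
      _ ≤ qy * (qy * x * qy) * qy := c2
      _ = y * x * y := by rw [← hqyy]; noncomm_ring
  have hx3 : x * x * x ≤ x * y * x := by
    have c1 := star_left_conjugate_le_conjugate h2 qx
    rw [hqx_star, sqrt_posPart_conj a ha] at c1
    have c2 := star_left_conjugate_le_conjugate c1 qx
    rw [hqx_star] at c2
    calc x * x * x = qx * (x * x) * qx := by rw [← hqxx]; noncomm_ring
      _ ≤ qx * (qx * y * qx) * qx := c2
      _ = x * y * x := by rw [← hqxx]; noncomm_ring
  set d := x - y with hd_def
  set s := x + y with hs_def
  set e := d * d with he_def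
  have hd_star : star d = d := by rw [hd_def, star_sub, hx_star, hy_star]
  have hs_pos : 0 ≤ s := add_nonneg hx hy
  have he_pos : 0 ≤ e := by
    rw [he_def]; nth_rw 1 [← hd_star]; exact star_mul_self_nonneg d
  have hineq1 : d * d * x + y * (d * d) ≤ 0 := by
    have hid : d * d * x + y * (d * d) = (x * d * x) - (y * d * y) := by
      rw [hd_def]; noncomm_ring
    rw [hid]
    have hxdx : x * d * x ≤ 0 := by
      have : x * d * x = x * x * x - x * y * x := by rw [hd_def]; noncomm_ring
      rw [this, sub_nonpos]; exact hx3
    have hydy : 0 ≤ y * d * y := by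
      have : y * d * y = y * x * y - y * y * y := by rw [hd_def]; noncomm_ring
      rw [this, sub_nonneg]; exact hy3
    exact sub_nonpos.mpr (hxdx.trans hydy)
  have hineq2 : x * (d * d) + d * d * y ≤ 0 := by
    have hstar : star (d * d * x + y * (d * d)) = x * (d * d) + d * d * y := by
      simp only [star_add, star_mul, hd_star, hx_star, hy_star]
    have h' := star_le_star_iff.mpr hineq1
    rwa [hstar, star_zero] at h'
  have hkey : s * e + e * s ≤ 0 := by
    have hid : s * e + e * s = (d * d * x + y * (d * d)) + (x * (d * d) + d * d * y) := by
      rw [hs_def, he_def]; noncomm_ring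
    rw [hid]
    exact add_nonpos hineq1 hineq2
  have h0 := sqrt_mul_sqrt_eq_zero_of_anticomm s e hs_pos he_pos hkey
  -- deduce s * d = 0
  set ps := CFC.sqrt s with hps_def
  set pe := CFC.sqrt e with hpe_def
  have hps_star : star ps = ps := (CFC.sqrt_nonneg (a := s)).isSelfAdjoint.star_eq
  have hpe_star : star pe = pe := (CFC.sqrt_nonneg (a := e)).isSelfAdjoint.star_eq
  have hpss : ps * ps = s := CFC.sqrt_mul_sqrt_self s hs_pos
  have hpee : pe * pe = e := CFC.sqrt_mul_sqrt_self e he_pos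
  have h0' : pe * ps = 0 := by
    have := congrArg star h0
    rwa [star_mul, hps_star, hpe_star, star_zero] at this
  have hpsd : ps * d = 0 := by
    have hmul : (ps * d) * star (ps * d) = 0 := by
      rw [star_mul, hps_star, hd_star]
      calc ps * d * (d * ps) = ps * (d * d) * ps := by noncomm_ring
        _ = ps * (pe * pe) * ps := by rw [hpee]
        _ = (ps * pe) * (pe * ps) := by noncomm_ring
        _ = 0 := by rw [h0, zero_mul]
    exact (CStarRing.mul_star_self_eq_zero_iff _).mp hmul
  have hsd : s * d = 0 := by
    calc s * d = ps * (ps * d) := by rw [← hpss]; noncomm_ring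
      _ = 0 := by rw [hpsd, mul_zero]
  have hds : d * s = 0 := by
    have := congrArg star hsd
    rwa [star_mul, hd_star, hs_pos.isSelfAdjoint.star_eq, star_zero] at this
  have hxxyy : x * x = y * y := by
    have hsum : (x * x - y * y) + (x * x - y * y) = 0 := by
      have hid : (x * x - y * y) + (x * x - y * y) = s * d + d * s := by
        rw [hs_def, hd_def]; noncomm_ring
      rw [hid, hsd, hds, add_zero]
    have hhalf : x * x - y * y = (1/2 : ℝ) • ((x * x - y * y) + (x * x - y * y)) := by
      module
    rw [hsum, smul_zero, sub_eq_zero] at hhalf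
    exact hhalf
  calc x = CFC.sqrt (x * x) := (CFC.sqrt_mul_self x hx).symm
    _ = CFC.sqrt (y * y) := by rw [hxxyy]
    _ = y := CFC.sqrt_mul_self y hy

end Auxiliary

/-- If `a, b` are self-adjoint elements of a unital C*-algebra with
`σ(a y) = σ(b y)` for every positive invertible `y`, then `a = b`. -/
theorem eq_of_spectrum_mul_eq {A : Type*} [CStarAlgebra A]
    [PartialOrder A] [StarOrderedRing A] (a b : A)
    (ha : IsSelfAdjoint a) (hb : IsSelfAdjoint b)
    (h : ∀ y : A, 0 ≤ y → IsUnit y → spectrum ℂ (a * y) = spectrum ℂ (b * y)) :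
    a = b := by
  have hsymm : ∀ y : A, 0 ≤ y → IsUnit y → spectrum ℂ (b * y) = spectrum ℂ (a * y) :=
    fun y hy hyu => (h y hy hyu).symm
  have hneg : ∀ y : A, 0 ≤ y → IsUnit y → spectrum ℂ (-a * y) = spectrum ℂ (-b * y) := by
    intro y hy hyu
    rw [neg_mul, neg_mul, ← spectrum.neg_eq, ← spectrum.neg_eq, h y hy hyu]
  have hnegsymm : ∀ y : A, 0 ≤ y → IsUnit y → spectrum ℂ (-b * y) = spectrum ℂ (-a * y) :=
    fun y hy hyu => (hneg y hy hyu).symm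
  have h1 : b ≤ a⁺ := le_posPart_of_spectrum_mul_eq a b ha hb h
  have h2 : a ≤ b⁺ := le_posPart_of_spectrum_mul_eq b a hb ha hsymm
  have hpos : a⁺ = b⁺ := posPart_eq_posPart_of_le a b ha hb h1 h2
  have h3 : -b ≤ (-a)⁺ := le_posPart_of_spectrum_mul_eq (-a) (-b) ha.neg hb.neg hneg
  have h4 : -a ≤ (-b)⁺ := le_posPart_of_spectrum_mul_eq (-b) (-a) hb.neg ha.neg hnegsymm
  have hneg' : (-a)⁺ = (-b)⁺ := posPart_eq_posPart_of_le (-a) (-b) ha.neg hb.neg h3 h4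
  have hnegPart : a⁻ = b⁻ := by
    rw [← CFC.posPart_neg a, ← CFC.posPart_neg b, hneg']
  calc a = a⁺ - a⁻ := (CFC.posPart_sub_negPart a ha).symm
    _ = b⁺ - b⁻ := by rw [hpos, hnegPart]
    _ = b := CFC.posPart_sub_negPart b hb
end

section
/- Let A be a unital C*-algebra and let a, b ∈ A be self-adjoint elements such that σ(ay) = σ(by) for every positive invertible y ∈ A. Then for every natural number n ≥ 1, the inequalities ‖n·b − (n−1)·a‖ ≤ ‖b‖ and ‖n·(b − a)‖ ≤ ‖b‖ hold. -/
section Helpers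
variable {A : Type*} [CStarAlgebra A]

private lemma norm_eq_of_spec_eq {x y : A} (hx : IsSelfAdjoint x) (hy : IsSelfAdjoint y)
    (h : spectrum ℂ x = spectrum ℂ y) : ‖x‖ = ‖y‖ := by
  rw [← hx.toReal_spectralRadius_complex_eq_norm, ← hy.toReal_spectralRadius_complex_eq_norm]
  unfold spectralRadius
  rw [h]

private lemma mem_spec_add_algebraMap_iff (x : A) (r : ℝ) (z : ℂ) :
    z ∈ spectrum ℂ (x + algebraMap ℝ A r) ↔ z - (r : ℂ) ∈ spectrum ℂ x := by
  rw [spectrum.mem_iff, spectrum.mem_iff]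
  have e : algebraMap ℂ A (z - (r:ℂ)) - x = algebraMap ℂ A z - (x + algebraMap ℝ A r) := by
    rw [map_sub]
    have : (algebraMap ℂ A) ((r:ℝ) : ℂ) = algebraMap ℝ A r := by
      rw [IsScalarTower.algebraMap_apply ℝ ℂ A r, Complex.coe_algebraMap]
    rw [this]
    abel
  rw [e]

variable [PartialOrder A] [StarOrderedRing A]

private lemma norm_le_of_neg_le_of_le [Nontrivial A] {x : A} (hx : IsSelfAdjoint x) {c : ℝ}
    (h1 : -(algebraMap ℝ A c) ≤ x) (h2 : x ≤ algebraMap ℝ A c) : ‖x‖ ≤ c := by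
  rcases CStarAlgebra.norm_or_neg_norm_mem_spectrum (a := x) hx with ht | ht
  · exact (le_algebraMap_iff_spectrum_le (R := ℝ) (a := x) hx).mp h2 _ ht
  · have h1' : algebraMap ℝ A (-c) ≤ x := by rwa [map_neg]
    have := (algebraMap_le_iff_le_spectrum (R := ℝ) (a := x) hx).mp h1' _ ht
    linarith

private lemma smul_mono_nonneg {c : ℝ} (hc : 0 ≤ c) {x y : A} (hxy : x ≤ y) :
    c • x ≤ c • y := by
  rw [← sub_nonneg, ← smul_sub]
  have h0 : (0:A) ≤ y - x := sub_nonneg.mpr hxy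
  have key := star_left_conjugate_nonneg h0 (algebraMap ℝ A (Real.sqrt c))
  have hsa : star (algebraMap ℝ A (Real.sqrt c)) = algebraMap ℝ A (Real.sqrt c) := by
    rw [Algebra.algebraMap_eq_smul_one, star_smul, star_one, star_trivial]
  rw [hsa] at key
  have e : algebraMap ℝ A (Real.sqrt c) * (y - x) * algebraMap ℝ A (Real.sqrt c)
      = c • (y - x) := by
    rw [Algebra.algebraMap_eq_smul_one]
    simp only [smul_mul_assoc, mul_smul_comm, one_mul, mul_one, smul_smul]
    rw [Real.mul_self_sqrt hc]
  rwa [e] at key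

private lemma am_mono {c d : ℝ} (hcd : c ≤ d) : (algebraMap ℝ A c) ≤ algebraMap ℝ A d := by
  rw [← sub_nonneg, ← map_sub]
  rw [Algebra.algebraMap_eq_smul_one]
  have h1 : (0:A) ≤ 1 := by
    have := star_mul_self_nonneg (1:A)
    rwa [star_one, one_mul] at this
  have := smul_mono_nonneg (sub_nonneg.mpr hcd) h1
  simpa using this

end Helpers

section Key
variable {A : Type*} [CStarAlgebra A] [PartialOrder A] [StarOrderedRing A] [Nontrivial A]

private lemma key {a b : A} (ha : IsSelfAdjoint a) (hb : IsSelfAdjoint b)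
    (h : ∀ y : A, 0 ≤ y → IsUnit y → spectrum ℂ (a * y) = spectrum ℂ (b * y))
    {k : ℝ} (hk : 1 ≤ k) {δ : ℝ} (hδ : 0 < δ) :
    (2:ℝ) • b - (k • a - (k-1) • b) ≤ algebraMap ℝ A (‖k • a - (k-1) • b‖ + 2*δ) := by
  have hk0 : (0:ℝ) ≤ k := by linarith
  have hk1 : (0:ℝ) ≤ k - 1 := by linarith
  set w : A := k • a - (k-1) • b with hw_def
  have hw : IsSelfAdjoint w :=
    ((IsSelfAdjoint.all k).smul ha).sub ((IsSelfAdjoint.all (k-1)).smul hb)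
  set R := ‖w‖ with hR_def
  have hR : 0 ≤ R := norm_nonneg w
  -- the functions
  set g : ℝ → ℝ := fun t => (max t 0 + δ)⁻¹ with hg_def
  have hden : ∀ t : ℝ, 0 < max t 0 + δ :=
    fun t => add_pos_of_nonneg_of_pos (le_max_right t 0) hδ
  have hgpos : ∀ t, 0 < g t := fun t => inv_pos.mpr (hden t)
  have hgc : Continuous g :=
    ((continuous_id.max continuous_const).add continuous_const).inv₀ (fun t => (hden t).ne')
  set q : ℝ → ℝ := fun t => Real.sqrt (g t) with hq_def
  have hqpos : ∀ t, 0 < q t := fun t => Real.sqrt_pos.mpr (hgpos t)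
  have hqc : Continuous q := Real.continuous_sqrt.comp hgc
  set qi : ℝ → ℝ := fun t => (q t)⁻¹ with hqi_def
  have hqic : Continuous qi := hqc.inv₀ (fun t => (hqpos t).ne')
  set s := cfc q w with hs_def
  set si := cfc qi w with hsi_def
  have hs : IsSelfAdjoint s := cfc_predicate q w
  have hsi : IsSelfAdjoint si := cfc_predicate qi w
  have hmulssi : s * si = 1 := by
    rw [hs_def, hsi_def, ← cfc_mul q qi w hqc.continuousOn hqic.continuousOn]
    calc cfc (fun t => q t * qi t) w = cfc (fun _ : ℝ => (1:ℝ)) w :=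
          cfc_congr (fun t _ => mul_inv_cancel₀ (hqpos t).ne')
      _ = 1 := cfc_const_one ℝ w
  have hmulsis : si * s = 1 := by
    rw [hs_def, hsi_def, ← cfc_mul qi q w hqic.continuousOn hqc.continuousOn]
    calc cfc (fun t => qi t * q t) w = cfc (fun _ : ℝ => (1:ℝ)) w :=
          cfc_congr (fun t _ => inv_mul_cancel₀ (hqpos t).ne')
      _ = 1 := cfc_const_one ℝ w
  set sU : Aˣ := ⟨s, si, hmulssi, hmulsis⟩ with hsU_def
  have hy0 : (0:A) ≤ s * s := by
    have := star_mul_self_nonneg s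
    rwa [hs.star_eq] at this
  have hyU : IsUnit (s * s) := by
    have : ((sU * sU : Aˣ) : A) = s * s := rfl
    exact this ▸ (sU * sU).isUnit
  have hspec0 := h (s * s) hy0 hyU
  have hconj : ∀ x : A, s * (x * (s * s)) * si = s * x * s := by
    intro x
    have e1 : s * (x * (s * s)) * si = s * x * s * (s * si) := by
      simp only [mul_assoc]
    rw [e1, hmulssi, mul_one]
  have hA : spectrum ℂ (s * a * s) = spectrum ℂ (s * b * s) := by
    have e1 : s * a * s = ↑sU * (a * (s * s)) * ↑sU⁻¹ := (hconj a).symm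
    have e2 : s * b * s = ↑sU * (b * (s * s)) * ↑sU⁻¹ := (hconj b).symm
    rw [e1, e2, spectrum.units_conjugate, spectrum.units_conjugate, hspec0]
  have hsas : IsSelfAdjoint (s * a * s) := by
    rw [IsSelfAdjoint]
    simp only [star_mul, hs.star_eq, ha.star_eq, mul_assoc]
  have hsbs : IsSelfAdjoint (s * b * s) := by
    rw [IsSelfAdjoint]
    simp only [star_mul, hs.star_eq, hb.star_eq, mul_assoc]
  set r := ‖s * a * s‖ with hr_def
  have hr0 : 0 ≤ r := norm_nonneg _
  have hnAB : ‖s * b * s‖ = r := norm_eq_of_spec_eq hsbs hsas hA.symm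
  set A1 := s * a * s + algebraMap ℝ A r with hA1_def
  set B1 := s * b * s + algebraMap ℝ A r with hB1_def
  have hA1sa : IsSelfAdjoint A1 := by
    refine hsas.add ?_
    rw [Algebra.algebraMap_eq_smul_one]
    exact (IsSelfAdjoint.all r).smul ((IsSelfAdjoint.one (R := A)))
  have hB1sa : IsSelfAdjoint B1 := by
    refine hsbs.add ?_
    rw [Algebra.algebraMap_eq_smul_one]
    exact (IsSelfAdjoint.all r).smul ((IsSelfAdjoint.one (R := A)))
  have hA1 : (0:A) ≤ A1 := by
    have h1 := hsas.neg_algebraMap_norm_le_self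
    have := add_le_add_left h1 (algebraMap ℝ A ‖s * a * s‖)
    simpa [hA1_def, hr_def] using this
  have hB1 : (0:A) ≤ B1 := by
    have h1 := hsbs.neg_algebraMap_norm_le_self
    have := add_le_add_left h1 (algebraMap ℝ A ‖s * b * s‖)
    rw [hnAB] at this
    simpa [hB1_def] using this
  have hA1B1 : spectrum ℂ A1 = spectrum ℂ B1 := by
    ext z
    rw [hA1_def, hB1_def, mem_spec_add_algebraMap_iff, mem_spec_add_algebraMap_iff, hA]
  have hnA1B1 : ‖A1‖ = ‖B1‖ := norm_eq_of_spec_eq hA1sa hB1sa hA1B1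
  -- the element u = w * g(w)
  set u := cfc (fun t : ℝ => t * g t) w with hu_def
  have hid_c : ContinuousOn (fun t : ℝ => t) (spectrum ℝ w) := continuousOn_id
  have htq_c : Continuous (fun t : ℝ => t * q t) := continuous_id.mul hqc
  have hw_id : cfc (fun t : ℝ => t) w = w := cfc_id' ℝ w hw
  have e1 : w * s = cfc (fun t : ℝ => t * q t) w := by
    conv_lhs => rw [← hw_id, hs_def]
    rw [← cfc_mul (fun t : ℝ => t) q w continuousOn_id hqc.continuousOn]
  have e2 : s * (w * s) = cfc (fun t : ℝ => q t * (t * q t)) w := by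
    rw [e1]
    conv_lhs => rw [hs_def]
    rw [← cfc_mul q (fun t : ℝ => t * q t) w hqc.continuousOn htq_c.continuousOn]
  have hu_eq : s * w * s = u := by
    rw [mul_assoc, e2, hu_def]
    apply cfc_congr
    intro t _
    show q t * (t * q t) = t * g t
    have e4 : q t * q t = g t := Real.mul_self_sqrt (hgpos t).le
    calc q t * (t * q t) = t * (q t * q t) := by ring
      _ = t * g t := by rw [e4]
  have hidentity : k • (s * a * s) - (k-1) • (s * b * s) = u := by
    rw [← hu_eq, hw_def]
    simp only [mul_sub, sub_mul, mul_smul_comm, smul_mul_assoc]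
  set μ := R / (R + δ) with hμ_def
  have hRδ : 0 < R + δ := by linarith
  have hμ0 : 0 ≤ μ := div_nonneg hR hRδ.le
  have hμ1 : μ ≤ 1 := by
    rw [hμ_def, div_le_one hRδ]
    linarith
  have hu_le : u ≤ algebraMap ℝ A μ := by
    rw [hu_def]
    apply cfc_le_algebraMap _ _ _ ?_ ((continuous_id'.mul hgc).continuousOn) hw
    intro t ht
    have htR : |t| ≤ R := by
      have := spectrum.norm_le_norm_of_mem ht
      rwa [Real.norm_eq_abs] at this
    rcases le_or_gt t 0 with h0 | h0
    · have : t * g t ≤ 0 := by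
        have := mul_le_mul_of_nonneg_right h0 (hgpos t).le
        simpa using this
      show t * g t ≤ μ
      linarith
    · have hmax : max t 0 = t := max_eq_left h0.le
      have htR' : t ≤ R := (abs_le.mp htR).2
      show t * g t ≤ μ
      rw [hg_def]
      simp only [hmax]
      rw [hμ_def, ← div_eq_mul_inv, div_le_div_iff₀ (by linarith) hRδ]
      nlinarith
  -- extrapolation: ‖B1‖ ≤ μ + r
  have hkey1 : k • A1 = u + (k-1) • B1 + algebraMap ℝ A r := by
    rw [← hidentity, hA1_def, hB1_def, Algebra.algebraMap_eq_smul_one]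
    module
  have hB1le : B1 ≤ algebraMap ℝ A ‖B1‖ := hB1sa.le_algebraMap_norm_self
  have hsmulB1 : (k-1) • B1 ≤ algebraMap ℝ A ((k-1) * ‖B1‖) := by
    have h2 := smul_mono_nonneg hk1 hB1le
    have e : (k-1) • (algebraMap ℝ A ‖B1‖) = algebraMap ℝ A ((k-1) * ‖B1‖) := by
      rw [Algebra.algebraMap_eq_smul_one, Algebra.algebraMap_eq_smul_one, smul_smul]
    rwa [e] at h2
  have hstep : k • A1 ≤ algebraMap ℝ A (μ + (k-1) * ‖B1‖ + r) := by
    rw [hkey1, map_add, map_add]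
    exact add_le_add (add_le_add hu_le hsmulB1) le_rfl
  have hnormA1 : k * ‖A1‖ ≤ μ + (k-1) * ‖B1‖ + r := by
    have h0 : (0:A) ≤ k • A1 := by
      have := smul_mono_nonneg hk0 hA1
      simpa using this
    have hge : 0 ≤ μ + (k-1) * ‖B1‖ + r := by positivity
    have := (CStarAlgebra.norm_le_iff_le_algebraMap (k • A1) hge h0).mpr hstep
    rwa [norm_smul, Real.norm_eq_abs, abs_of_nonneg hk0] at this
  have hB1norm : ‖B1‖ ≤ μ + r := by
    rw [hnA1B1] at hnormA1
    nlinarith [norm_nonneg B1]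
  -- s b s ≤ μ • 1
  have hBle : s * b * s ≤ algebraMap ℝ A μ := by
    have h1 : B1 ≤ algebraMap ℝ A (μ + r) := le_trans hB1le (am_mono hB1norm)
    have h2 : s * b * s = B1 - algebraMap ℝ A r := by rw [hB1_def]; abel
    rw [h2]
    calc B1 - algebraMap ℝ A r ≤ algebraMap ℝ A (μ + r) - algebraMap ℝ A r :=
          sub_le_sub_right h1 _
      _ = algebraMap ℝ A μ := by rw [← map_sub]; ring_nf
  -- unconjugate
  have hb_le : b ≤ μ • (si * si) := by
    have h1 := star_left_conjugate_le_conjugate hBle si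
    rw [hsi.star_eq] at h1
    have e1 : si * (s * b * s) * si = b := by
      have : si * (s * b * s) * si = (si * s) * b * (s * si) := by
        simp only [mul_assoc]
      rw [this, hmulsis, hmulssi, one_mul, mul_one]
    have e2 : si * algebraMap ℝ A μ * si = μ • (si * si) := by
      rw [Algebra.algebraMap_eq_smul_one]
      simp only [mul_smul_comm, smul_mul_assoc, mul_one, one_mul]
    rwa [e1, e2] at h1
  have hsisi : si * si = cfc (fun t : ℝ => max t 0 + δ) w := by
    rw [hsi_def, ← cfc_mul qi qi w hqic.continuousOn hqic.continuousOn]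
    apply cfc_congr
    intro t _
    show qi t * qi t = max t 0 + δ
    rw [hqi_def]
    simp only []
    rw [← mul_inv, Real.mul_self_sqrt (hgpos t).le, hg_def]
    simp only [inv_inv]
  -- final bound
  have h2b : (2:ℝ) • b - w ≤ (2*μ) • (si * si) - w := by
    have h1 := smul_mono_nonneg (by norm_num : (0:ℝ) ≤ 2) hb_le
    rw [smul_smul] at h1
    exact sub_le_sub_right h1 w
  have hfc : Continuous (fun t : ℝ => max t 0 + δ) :=
    (continuous_id.max continuous_const).add continuous_const
  have hcfc_final : (2*μ) • (si * si) - w = cfc (fun t : ℝ => 2*μ*(max t 0 + δ) - t) w := by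
    rw [hsisi]
    have e1 : cfc (fun t : ℝ => 2*μ*(max t 0 + δ) - t) w
        = cfc (fun t : ℝ => 2*μ*(max t 0 + δ)) w - cfc (fun t : ℝ => t) w := by
      exact cfc_sub _ _ w ((continuous_const.mul hfc).continuousOn) continuousOn_id
    have e2 : cfc (fun t : ℝ => 2*μ*(max t 0 + δ)) w
        = (2*μ) • cfc (fun t : ℝ => max t 0 + δ) w := by
      rw [← cfc_smul (2*μ) _ w hfc.continuousOn]
      apply cfc_congr
      intro t _
      simp [smul_eq_mul]
    rw [e1, e2, hw_id]
  have hfinal_le : cfc (fun t : ℝ => 2*μ*(max t 0 + δ) - t) w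
      ≤ algebraMap ℝ A (R + 2*δ) := by
    apply cfc_le_algebraMap _ _ _ ?_ ((continuous_const.mul hfc).sub continuous_id').continuousOn hw
    intro t ht
    have htR : |t| ≤ R := by
      have := spectrum.norm_le_norm_of_mem ht
      rwa [Real.norm_eq_abs] at this
    have h1 := (abs_le.mp htR).1
    have h2 := (abs_le.mp htR).2
    show 2*μ*(max t 0 + δ) - t ≤ R + 2*δ
    rcases le_or_gt t 0 with h0 | h0
    · rw [max_eq_right h0]
      nlinarith
    · rw [max_eq_left h0.le]
      nlinarith
  calc (2:ℝ) • b - w ≤ (2*μ) • (si * si) - w := h2b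
    _ = cfc (fun t : ℝ => 2*μ*(max t 0 + δ) - t) w := hcfc_final
    _ ≤ algebraMap ℝ A (R + 2*δ) := hfinal_le

private lemma key2 {a b : A} (ha : IsSelfAdjoint a) (hb : IsSelfAdjoint b)
    (h : ∀ y : A, 0 ≤ y → IsUnit y → spectrum ℂ (a * y) = spectrum ℂ (b * y))
    {k : ℝ} (hk : 1 ≤ k) :
    ‖(k+1) • b - k • a‖ ≤ ‖k • a - (k-1) • b‖ := by
  have hsa : IsSelfAdjoint ((k+1) • b - k • a) :=
    ((IsSelfAdjoint.all (k+1)).smul hb).sub ((IsSelfAdjoint.all k).smul ha)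
  have hmain : ∀ δ : ℝ, 0 < δ → ‖(k+1) • b - k • a‖ ≤ ‖k • a - (k-1) • b‖ + 2*δ := by
    intro δ hδ
    have h1 := key ha hb h hk hδ
    have h' : ∀ y : A, 0 ≤ y → IsUnit y → spectrum ℂ ((-a) * y) = spectrum ℂ ((-b) * y) := by
      intro y hy hyU
      rw [neg_mul, neg_mul, ← spectrum.neg_eq, ← spectrum.neg_eq, h y hy hyU]
    have h2 := key ha.neg hb.neg h' hk hδ
    have e0 : k • (-a) - (k-1) • (-b) = -(k • a - (k-1) • b) := by module
    rw [e0, norm_neg] at h2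
    have e2 : (2:ℝ) • (-b) - -(k • a - (k-1) • b) = -((2:ℝ) • b - (k • a - (k-1) • b)) := by
      module
    rw [e2] at h2
    have e3 : (2:ℝ) • b - (k • a - (k-1) • b) = (k+1) • b - k • a := by module
    rw [e3] at h1 h2
    have hneg : -(algebraMap ℝ A (‖k • a - (k-1) • b‖ + 2*δ)) ≤ (k+1) • b - k • a :=
      neg_le.mp (by simpa using h2)
    exact norm_le_of_neg_le_of_le hsa hneg h1
  refine le_of_forall_pos_le_add fun ε hε => ?_
  have := hmain (ε/2) (by positivity)
  linarith

end Key

/-- If `a, b` are self-adjoint with `σ(a y) = σ(b y)` for every positive invertible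
`y`, then for every `n ≥ 1` one has `‖n • b - (n - 1) • a‖ ≤ ‖b‖` and `‖n • (b - a)‖ ≤ ‖b‖`. -/
theorem norm_smul_sub_le_of_spectrum_mul_eq {A : Type*} [CStarAlgebra A]
    [PartialOrder A] [StarOrderedRing A] (a b : A)
    (ha : IsSelfAdjoint a) (hb : IsSelfAdjoint b)
    (h : ∀ y : A, 0 ≤ y → IsUnit y → spectrum ℂ (a * y) = spectrum ℂ (b * y)) :
    ∀ n : ℕ, 1 ≤ n → ‖n • b - (n - 1) • a‖ ≤ ‖b‖ ∧ ‖n • (b - a)‖ ≤ ‖b‖ := by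
  obtain hTriv | hNontriv := subsingleton_or_nontrivial A
  · intro n hn
    constructor
    · rw [Subsingleton.elim (n • b - (n - 1) • a) (0:A), norm_zero]
      exact norm_nonneg b
    · rw [Subsingleton.elim (n • (b - a)) (0:A), norm_zero]
      exact norm_nonneg b
  · have hab : ‖a‖ = ‖b‖ := by
      refine norm_eq_of_spec_eq ha hb ?_
      simpa using h 1 zero_le_one isUnit_one
    have core : ∀ n : ℕ, 1 ≤ n →
        ‖(n:ℝ) • b - ((n:ℝ)-1) • a‖ ≤ ‖b‖ ∧ ‖(n:ℝ) • a - ((n:ℝ)-1) • b‖ ≤ ‖b‖ := by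
      intro n hn
      induction n with
      | zero => omega
      | succ m ih =>
        rcases Nat.lt_or_ge m 1 with hm | hm
        · interval_cases m
          constructor
          · simp
          · simpa using hab.le
        · have ihm := ih hm
          have hm1 : (1:ℝ) ≤ (m:ℝ) := by exact_mod_cast hm
          have hcast : ((m+1 : ℕ) : ℝ) = (m:ℝ)+1 := by push_cast; ring
          have hsimp : ((m:ℝ)+1) - 1 = (m:ℝ) := by ring
          constructor
          · have h1 := key2 ha hb h hm1
            rw [hcast, hsimp]
            exact le_trans h1 ihm.2
          · have h' : ∀ y : A, 0 ≤ y → IsUnit y →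
                spectrum ℂ (b * y) = spectrum ℂ (a * y) := fun y hy hyU => (h y hy hyU).symm
            have h1 := key2 hb ha h' hm1
            rw [hcast, hsimp]
            exact le_trans h1 ihm.1
    intro n hn
    have hc : ((n - 1 : ℕ) : ℝ) = (n:ℝ) - 1 := by
      rw [Nat.cast_sub hn, Nat.cast_one]
    constructor
    · have hcore := (core n hn).1
      rw [← Nat.cast_smul_eq_nsmul ℝ n b, ← Nat.cast_smul_eq_nsmul ℝ (n-1) a, hc]
      exact hcore
    · have h21 := (core (2*n+1) (by omega)).1
      have hidn : ((2*n+1 : ℕ):ℝ) • b - (((2*n+1 : ℕ):ℝ) - 1) • a - b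
          = (2:ℝ) • ((n:ℝ) • (b - a)) := by
        push_cast
        module
      have h2 : (2:ℝ) * ‖(n:ℝ) • (b-a)‖ ≤ 2 * ‖b‖ := by
        have hn2 : ‖(2:ℝ) • ((n:ℝ) • (b-a))‖ = 2 * ‖(n:ℝ) • (b-a)‖ := by
          rw [norm_smul]
          norm_num
        calc (2:ℝ) * ‖(n:ℝ) • (b-a)‖ = ‖(2:ℝ) • ((n:ℝ) • (b-a))‖ := hn2.symm
          _ = ‖((2*n+1 : ℕ):ℝ) • b - (((2*n+1 : ℕ):ℝ) - 1) • a - b‖ := by rw [hidn]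
          _ ≤ ‖((2*n+1 : ℕ):ℝ) • b - (((2*n+1 : ℕ):ℝ) - 1) • a‖ + ‖b‖ := norm_sub_le _ _
          _ ≤ ‖b‖ + ‖b‖ := add_le_add h21 le_rfl
          _ = 2 * ‖b‖ := by ring
      have h3 : ‖(n:ℝ) • (b-a)‖ ≤ ‖b‖ := by linarith
      rwa [← Nat.cast_smul_eq_nsmul ℝ n (b - a)]
end

section
/- Let A and B be unital C*-algebras and let J be a Jordan isomorphism from the self-adjoint part of A onto the self-adjoint part of B, i.e., a bijective real-linear map J from the set of self-adjoint elements of A onto the set of self-adjoint elements of B satisfying J((ab+ba)/2) = (J(a)J(b)+J(b)J(a))/2 for all self-adjoint a, b ∈ A. Then σ(J(a)J(b)) = σ(ab) for all self-adjoint a, b ∈ A. -/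
/-- The Jordan product `a ∘ b = (ab + ba)/2` of two self-adjoint elements of a C*-algebra,
as a self-adjoint element. -/
noncomputable def jordanMul {C : Type*} [CStarAlgebra C] (a b : selfAdjoint C) :
    selfAdjoint C :=
  ⟨(1 / 2 : ℝ) • ((a : C) * b + (b : C) * a), by
    rw [selfAdjoint.mem_iff, star_smul, star_add, star_mul, star_mul,
      a.prop.star_eq, b.prop.star_eq, add_comm, star_trivial]⟩

open ComplexStarModule Complex

section Aux

variable {A B : Type*} [CStarAlgebra A] [CStarAlgebra B]

/-- Cancellation of doubling in a complex module. -/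
lemma JIso.half_cancel {M : Type*} [AddCommGroup M] [Module ℂ M] {u v : M}
    (h : u + u = v + v) : u = v := by
  have h2 : (2:ℂ) • u = (2:ℂ) • v := by rw [two_smul, two_smul]; exact h
  exact smul_right_injective M two_ne_zero h2

/-- A Jordan inverse in an associative algebra is a genuine inverse. -/
lemma JIso.jordan_unit {R : Type*} [Ring R] [Algebra ℂ R] (u v : R)
    (h1 : u*v + v*u = 1 + 1) (h2 : u*u*v + v*(u*u) = u + u) :
    u*v = 1 ∧ v*u = 1 := by
  have e1 : u*u*v + u*(v*u) = u + u := by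
    have := congrArg (u * ·) h1
    simpa [mul_add, mul_one, ← mul_assoc] using this
  have e2 : u*(v*u) + v*u*u = u + u := by
    have := congrArg (· * u) h1
    simpa [add_mul, one_mul, mul_assoc] using this
  have r1 : u*(v*u) = v*(u*u) := add_left_cancel (e1.trans h2.symm)
  have r2 : u*(v*u) = u*u*v := by
    have hv : (v*u*u : R) = v*(u*u) := by noncomm_ring
    rw [hv] at e2
    exact add_right_cancel (e2.trans h2.symm)
  set p := u*v with hp
  have hvu : v*u = (1+1) - p := by rw [eq_sub_iff_add_eq, add_comm]; exact h1
  have c1 : p*p = u*u*v*v := by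
    calc p*p = (u*(v*u))*v := by rw [hp]; noncomm_ring
      _ = u*u*v*v := by rw [r2]
  have c2 : p*p = p + p - u*u*v*v := by
    calc p*p = u*((v*u)*v) := by rw [hp]; noncomm_ring
      _ = u*(((1+1) - (u*v))*v) := by rw [hvu, hp]
      _ = (u*v + u*v) - u*u*v*v := by noncomm_ring
      _ = p + p - u*u*v*v := by rw [hp]
  have hpp : p*p = p := by
    have hsum : p*p + p*p = p + p := by
      nth_rewrite 1 [c1]
      nth_rewrite 1 [c2]
      abel
    exact JIso.half_cancel hsum
  have hq : (v*u)*(v*u) = p := by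
    calc (v*u)*(v*u) = v*(u*(v*u)) := by noncomm_ring
      _ = v*(u*u*v) := by rw [r2]
      _ = (v*(u*u))*v := by noncomm_ring
      _ = (u*(v*u))*v := by rw [r1]
      _ = (u*u*v)*v := by rw [r2]
      _ = (u*(v*u))*v := by rw [← r2]
      _ = p*p := by rw [hp]; noncomm_ring
      _ = p := hpp
  have e : ((1+1:R)-p)*((1+1)-p) = p := by rw [← hvu]; exact hq
  rw [show ((1+1:R)-p)*((1+1)-p) = ((1+1+(1+1)) - (p+p+(p+p))) + p*p from by noncomm_ring,
    hpp] at e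
  have hz : (1+1+(1+1):R) - (p+p+(p+p)) = 0 := add_right_cancel (e.trans (zero_add p).symm)
  have hfour : (p+p)+(p+p) = (1+1:R)+(1+1) := (sub_eq_zero.mp hz).symm
  have hpone : p = 1 := JIso.half_cancel (JIso.half_cancel hfour)
  refine ⟨hpone, ?_⟩
  rw [hvu, hpone]
  abel

/-- A left and a right invertibility of products give invertibility. -/
lemma JIso.isUnit_of_prod {R : Type*} [Ring R] {p q : R}
    (hF : IsUnit (p*q)) (hG : IsUnit (q*p)) : IsUnit p := by
  obtain ⟨f, hf⟩ := hF
  obtain ⟨g, hg⟩ := hG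
  have h1 : p * (q * ↑f⁻¹) = 1 := by rw [← mul_assoc, ← hf, Units.mul_inv]
  have h2 : (↑g⁻¹ * q) * p = 1 := by rw [mul_assoc, ← hg, Units.inv_mul]
  have heq : (q * ↑f⁻¹ : R) = ↑g⁻¹ * q := by
    calc q * ↑f⁻¹ = ((↑g⁻¹*q)*p) * (q*↑f⁻¹) := by rw [h2, one_mul]
      _ = (↑g⁻¹*q) * (p*(q*↑f⁻¹)) := by rw [mul_assoc]
      _ = ↑g⁻¹*q := by rw [h1, mul_one]
  refine ⟨⟨p, q*↑f⁻¹, h1, ?_⟩, rfl⟩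
  rw [heq]
  exact h2

lemma JIso.expand1 {C : Type*} [Ring C] [Algebra ℂ C] (x y : C) (μ : ℂ) :
    (algebraMap ℂ C μ - x*y) * (algebraMap ℂ C μ - y*x)
      = (μ*μ) • (1:C) - μ • (x*y + y*x) + x*(y*y)*x := by
  simp only [Algebra.smul_def, map_mul, mul_one]
  rw [sub_mul, mul_sub, mul_sub, ← Algebra.commutes μ (x*y)]
  noncomm_ring

lemma JIso.spec_swap {C : Type*} [CStarAlgebra C] {u w : C}
    (hu : IsSelfAdjoint u) (hw : IsSelfAdjoint w) :
    spectrum ℂ (u*w) = spectrum ℂ (w*u) := by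
  have hstar : star (u*w) = w*u := by rw [star_mul, hu.star_eq, hw.star_eq]
  ext μ
  rcases eq_or_ne μ 0 with rfl | h0
  · rw [spectrum.zero_mem_iff, spectrum.zero_mem_iff, ← hstar, isUnit_star]
  · exact spectrum.unit_mem_mul_comm (r := Units.mk0 μ h0)

lemma JIso.two_smul_jordanMul {C : Type*} [CStarAlgebra C] (a b : selfAdjoint C) :
    ((a:C)*b + (b:C)*a) = (2:ℂ) • ((jordanMul a b : C)) := by
  rw [jordanMul]
  push_cast
  rw [← algebraMap_smul ℂ (1/2 : ℝ) ((a:C)*b + (b:C)*a), smul_smul]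
  norm_num

variable (J : selfAdjoint A ≃ₗ[ℝ] selfAdjoint B)

/-- The complexification of a real-linear map of self-adjoint parts. -/
noncomputable def JIso.jt (x : A) : B :=
  (J (ℜ x) : B) + Complex.I • (J (ℑ x) : B)

lemma JIso.jt_coe (a : selfAdjoint A) : JIso.jt J (a : A) = J a := by
  have h1 : ℜ (a : A) = a := Subtype.ext (a.prop.coe_realPart)
  rw [JIso.jt, h1, a.prop.imaginaryPart, map_zero]
  simp

lemma JIso.jt_smul (c : ℂ) (x : A) : JIso.jt J (c • x) = c • JIso.jt J x := by
  simp only [JIso.jt, realPart_smul, imaginaryPart_smul, map_sub, map_add, map_smul,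
    AddSubgroup.coe_add, AddSubgroupClass.coe_sub, selfAdjoint.val_smul, smul_add]
  rw [show ∀ (r : ℝ) (u : B), r • u = (r : ℂ) • u from fun r u => (algebraMap_smul ℂ r u).symm,
    show ∀ (r : ℝ) (u : B), r • u = (r : ℂ) • u from fun r u => (algebraMap_smul ℂ r u).symm,
    show ∀ (r : ℝ) (u : B), r • u = (r : ℂ) • u from fun r u => (algebraMap_smul ℂ r u).symm,
    show ∀ (r : ℝ) (u : B), r • u = (r : ℂ) • u from fun r u => (algebraMap_smul ℂ r u).symm]
  match_scalars <;> simp [Complex.ext_iff]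

/-- The complexification as a `ℂ`-linear map. -/
noncomputable def JIso.L : A →ₗ[ℂ] B where
  toFun := JIso.jt J
  map_add' x y := by
    simp only [JIso.jt, map_add, AddSubgroup.coe_add, smul_add]; abel
  map_smul' := JIso.jt_smul J

lemma JIso.L_coe (a : selfAdjoint A) : JIso.L J (a : A) = J a := JIso.jt_coe J a

end Aux

section Aux2

variable {A B : Type*} [CStarAlgebra A] [CStarAlgebra B]

lemma JIso.ext_sa (f g : A →ₗ[ℂ] B) (h : ∀ a : selfAdjoint A, f a = g a) (x : A) :
    f x = g x := by
  rw [← realPart_add_I_smul_imaginaryPart x]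
  simp only [map_add, map_smul, h]

lemma JIso.jordanMul_one_left {C : Type*} [CStarAlgebra C] (b : selfAdjoint C) :
    jordanMul 1 b = b := by
  ext
  have : ((jordanMul 1 b : C)) = (1/2 : ℝ) • ((b:C) + (b:C)) := by
    simp [jordanMul]
  rw [this, ← two_smul ℝ ((b : C)), smul_smul]
  norm_num

variable (J : selfAdjoint A ≃ₗ[ℝ] selfAdjoint B)
  (hJ : ∀ a b : selfAdjoint A, J (jordanMul a b) = jordanMul (J a) (J b))

include hJ

lemma JIso.J_one : J (1 : selfAdjoint A) = 1 := by
  have key : ∀ y : selfAdjoint B, jordanMul (J 1) y = y := by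
    intro y
    have := hJ 1 (J.symm y)
    rw [JIso.jordanMul_one_left, J.apply_symm_apply] at this
    exact this.symm
  have h := key 1
  apply_fun (Subtype.val) at h
  simp only [jordanMul, selfAdjoint.val_one, mul_one, one_mul] at h
  rw [← two_smul ℝ ((J 1 : B)), smul_smul] at h
  norm_num at h
  exact Subtype.ext h

lemma JIso.L_one : JIso.L J (1 : A) = 1 := by
  have : ((1 : selfAdjoint A) : A) = (1 : A) := rfl
  rw [← this, JIso.L_coe, JIso.J_one J hJ]
  rfl

lemma JIso.base (a b : selfAdjoint A) :
    JIso.L J ((a:A)*(b:A) + (b:A)*(a:A))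
      = JIso.L J (a:A) * JIso.L J (b:A) + JIso.L J (b:A) * JIso.L J (a:A) := by
  rw [JIso.two_smul_jordanMul, map_smul, JIso.L_coe, hJ, JIso.L_coe, JIso.L_coe]
  exact (JIso.two_smul_jordanMul (J a) (J b)).symm

lemma JIso.step1 (a : selfAdjoint A) (y : A) :
    JIso.L J ((a:A)*y + y*(a:A))
      = JIso.L J (a:A) * JIso.L J y + JIso.L J y * JIso.L J (a:A) := by
  have hext := JIso.ext_sa
    ((JIso.L J).comp (LinearMap.mulLeft ℂ ((a:A)) + LinearMap.mulRight ℂ ((a:A))))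
    (LinearMap.mulLeft ℂ (JIso.L J (a:A)) ∘ₗ JIso.L J
      + LinearMap.mulRight ℂ (JIso.L J (a:A)) ∘ₗ JIso.L J)
    (fun b => by simpa using JIso.base J hJ a b) y
  simpa using hext

lemma JIso.step2 (x y : A) :
    JIso.L J (x*y + y*x) = JIso.L J x * JIso.L J y + JIso.L J y * JIso.L J x := by
  have hext := JIso.ext_sa
    ((JIso.L J).comp (LinearMap.mulRight ℂ y + LinearMap.mulLeft ℂ y))
    (LinearMap.mulRight ℂ (JIso.L J y) ∘ₗ JIso.L J
      + LinearMap.mulLeft ℂ (JIso.L J y) ∘ₗ JIso.L J)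
    (fun a => by simpa using JIso.step1 J hJ a y) x
  simpa using hext

lemma JIso.map_sq (x : A) : JIso.L J (x*x) = JIso.L J x * JIso.L J x := by
  have h := JIso.step2 J hJ x x
  rw [map_add] at h
  exact JIso.half_cancel h

lemma JIso.map_conj (x z : A) :
    JIso.L J (x*z*x) = JIso.L J x * JIso.L J z * JIso.L J x := by
  set L := JIso.L J with hL
  have lhs_eq : x*(x*z+z*x) + (x*z+z*x)*x = (x*x*z + z*(x*x)) + ((x*z*x) + (x*z*x)) := by
    noncomm_ring
  have key : L (x*z*x) + L (x*z*x) = (L x * L z * L x) + (L x * L z * L x) := by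
    calc L (x*z*x) + L (x*z*x)
        = L (x*(x*z+z*x) + (x*z+z*x)*x) - L (x*x*z + z*(x*x)) := by
          rw [lhs_eq]; simp only [map_add]; abel
      _ = (L x * (L x * L z + L z * L x) + (L x * L z + L z * L x) * L x)
          - ((L x * L x) * L z + L z * (L x * L x)) := by
          rw [JIso.step2 J hJ x (x*z+z*x), JIso.step2 J hJ x z,
            JIso.step2 J hJ (x*x) z, JIso.map_sq J hJ]
      _ = L x * L z * L x + L x * L z * L x := by noncomm_ring
  exact JIso.half_cancel key

lemma JIso.isUnit_map {x : A} (hx : IsUnit x) : IsUnit (JIso.L J x) := by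
  obtain ⟨xu, rfl⟩ := hx
  set x : A := (xu : A)
  set y : A := ((xu⁻¹ : Aˣ) : A)
  have hxy : x * y = 1 := Units.mul_inv xu
  have hyx : y * x = 1 := Units.inv_mul xu
  set L := JIso.L J with hL
  have h1 : L x * L y + L y * L x = 1 + 1 := by
    rw [← JIso.step2 J hJ x y, hxy, hyx, map_add, JIso.L_one J hJ]
  have h2 : L x * L x * L y + L y * (L x * L x) = L x + L x := by
    have harg : (x*x)*y + y*(x*x) = x + x := by
      rw [mul_assoc, hxy, mul_one, ← mul_assoc, hyx, one_mul]
    have h2' := JIso.step2 J hJ (x*x) y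
    rw [harg, map_add, JIso.map_sq J hJ] at h2'
    rw [← h2']
  obtain ⟨huv, hvu⟩ := JIso.jordan_unit (L x) (L y) h1 h2
  exact ⟨⟨L x, L y, huv, hvu⟩, rfl⟩

end Aux2

section Aux3

variable {A B : Type*} [CStarAlgebra A] [CStarAlgebra B]
  (J : selfAdjoint A ≃ₗ[ℝ] selfAdjoint B)
  (hJ : ∀ a b : selfAdjoint A, J (jordanMul a b) = jordanMul (J a) (J b))

include hJ

lemma JIso.symm_jordan (a b : selfAdjoint B) :
    J.symm (jordanMul a b) = jordanMul (J.symm a) (J.symm b) := by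
  apply J.injective
  rw [hJ, J.apply_symm_apply, J.apply_symm_apply, J.apply_symm_apply]

lemma JIso.L_symm_L (x : A) : JIso.L J.symm (JIso.L J x) = x := by
  rw [← realPart_add_I_smul_imaginaryPart x]
  simp only [map_add, map_smul]
  rw [JIso.L_coe, JIso.L_coe, JIso.L_coe, JIso.L_coe, J.symm_apply_apply, J.symm_apply_apply]

lemma JIso.isUnit_iff (x : A) : IsUnit (JIso.L J x) ↔ IsUnit x := by
  refine ⟨fun h => ?_, JIso.isUnit_map J hJ⟩
  have := JIso.isUnit_map J.symm (JIso.symm_jordan J hJ) h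
  rwa [JIso.L_symm_L J hJ] at this

lemma JIso.transport (x y : A) (μ : ℂ) :
    JIso.L J ((algebraMap ℂ A μ - x*y) * (algebraMap ℂ A μ - y*x))
      = (algebraMap ℂ B μ - JIso.L J x * JIso.L J y)
          * (algebraMap ℂ B μ - JIso.L J y * JIso.L J x) := by
  rw [JIso.expand1, JIso.expand1]
  rw [map_add, map_sub, map_smul, map_smul, JIso.L_one J hJ, JIso.step2 J hJ x y,
    JIso.map_conj J hJ x (y*y), JIso.map_sq J hJ y]

end Aux3

lemma JIso.not_mem_iff_units {C : Type*} [CStarAlgebra C] {u w : C}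
    (hu : IsSelfAdjoint u) (hw : IsSelfAdjoint w) (μ : ℂ) :
    μ ∉ spectrum ℂ (u*w)
      ↔ IsUnit ((algebraMap ℂ C μ - u*w) * (algebraMap ℂ C μ - w*u))
        ∧ IsUnit ((algebraMap ℂ C μ - w*u) * (algebraMap ℂ C μ - u*w)) := by
  constructor
  · intro h
    have h1 : IsUnit (algebraMap ℂ C μ - u*w) := spectrum.notMem_iff.mp h
    have h2 : IsUnit (algebraMap ℂ C μ - w*u) := by
      rw [JIso.spec_swap hu hw] at h
      exact spectrum.notMem_iff.mp h
    exact ⟨h1.mul h2, h2.mul h1⟩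
  · rintro ⟨hF, hG⟩
    rw [spectrum.notMem_iff]
    exact JIso.isUnit_of_prod hF hG

/-- A Jordan isomorphism `J` between the self-adjoint parts of unital C*-algebras
(a bijective real-linear map with `J(a ∘ b) = J(a) ∘ J(b)` for the Jordan product
`a ∘ b = (ab+ba)/2`) satisfies `σ(J(a)J(b)) = σ(ab)` for all self-adjoint `a, b`. -/
theorem spectrum_jordanIso_mul {A B : Type*} [CStarAlgebra A] [CStarAlgebra B]
    (J : selfAdjoint A ≃ₗ[ℝ] selfAdjoint B)
    (hJ : ∀ a b : selfAdjoint A, J (jordanMul a b) = jordanMul (J a) (J b)) :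
    ∀ a b : selfAdjoint A,
      spectrum ℂ ((J a : B) * (J b : B)) = spectrum ℂ ((a : A) * (b : A)) := by
  intro a b
  ext μ
  rw [← not_iff_not]
  rw [JIso.not_mem_iff_units (J a).prop (J b).prop μ, JIso.not_mem_iff_units a.prop b.prop μ]
  rw [show ((J a : B)) = JIso.L J (a : A) from (JIso.L_coe J a).symm,
    show ((J b : B)) = JIso.L J (b : A) from (JIso.L_coe J b).symm]
  rw [← JIso.transport J hJ, ← JIso.transport J hJ]
  rw [JIso.isUnit_iff J hJ, JIso.isUnit_iff J hJ]
end

section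
/- Let A and B be unital C*-algebras and let φ be a surjective map from the set of self-adjoint elements of A onto the set of self-adjoint elements of B satisfying σ(φ(a)φ(b)) = σ(ab) for all self-adjoint a, b ∈ A. Then s := φ(1) is a central symmetry of B, that is, s is self-adjoint, s² = 1, and s commutes with every element of B. -/
open Complex

/-- A self-adjoint element of a C*-algebra whose spectrum is contained in `{0}` is zero. -/
lemma aux_eq_zero {B : Type*} [CStarAlgebra B] {x : B} (hx : IsSelfAdjoint x)
    (h : spectrum ℂ x ⊆ {0}) : x = 0 := by
  have hr : spectralRadius ℂ x = 0 := by
    refine le_antisymm ?_ zero_le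
    rw [spectralRadius]
    refine iSup₂_le fun z hz => ?_
    have : z = 0 := h hz
    simp [this]
  have h2 := hx.spectralRadius_eq_nnnorm
  rw [hr] at h2
  have h3 : ‖x‖₊ = 0 := by exact_mod_cast h2.symm
  simpa using h3

/-- If `φ` is a surjective map between the self-adjoint parts of unital
C*-algebras with `σ(φ(a)φ(b)) = σ(ab)`, then `s = φ(1)` is a central symmetry:
self-adjoint, `s² = 1`, and commuting with every element of `B`. -/
theorem image_one_central_symmetry {A B : Type*} [CStarAlgebra A] [CStarAlgebra B]
    (φ : selfAdjoint A → selfAdjoint B) (hsurj : Function.Surjective φ)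
    (hφ : ∀ a b : selfAdjoint A,
      spectrum ℂ ((φ a : B) * (φ b : B)) = spectrum ℂ ((a : A) * (b : A))) :
    IsSelfAdjoint (φ 1 : B) ∧ (φ 1 : B) * (φ 1 : B) = 1 ∧
      ∀ b : B, (φ 1 : B) * b = b * (φ 1 : B) := by
  -- spectra of `s * c` are real for every self-adjoint `c`
  have hreal : ∀ c : selfAdjoint B, ∀ z ∈ spectrum ℂ ((φ 1 : B) * (c : B)), z = z.re := by
    intro c z hz
    obtain ⟨a, rfl⟩ := hsurj c
    rw [hφ 1 a, selfAdjoint.val_one, one_mul] at hz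
    exact a.2.mem_spectrum_eq_re hz
  -- `s` is a symmetry
  have s2 : (φ 1 : B) * (φ 1 : B) = 1 := by
    have h1 : spectrum ℂ ((φ 1 : B) * (φ 1 : B)) ⊆ {1} := by
      rw [hφ 1 1, selfAdjoint.val_one, one_mul]
      intro z hz
      rw [spectrum.mem_iff] at hz
      by_contra hne
      refine hz ?_
      have he : algebraMap ℂ A z - 1 = algebraMap ℂ A (z - 1) := by simp
      rw [he]
      exact (isUnit_iff_ne_zero.mpr (sub_ne_zero.mpr hne)).map (algebraMap ℂ A)
    have hsub : spectrum ℂ ((φ 1 : B) * (φ 1 : B) - 1) ⊆ {0} := by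
      intro z hz
      rw [show ((φ 1 : B) * (φ 1 : B) - 1) = ((φ 1 : B) * (φ 1 : B) - algebraMap ℂ B 1) by simp,
        ← spectrum.sub_singleton_eq] at hz
      obtain ⟨w, hw, u, hu, rfl⟩ := hz
      have hw1 : w = 1 := h1 hw
      have hu1 : u = 1 := hu
      simp [hw1, hu1]
    have hsa2 : IsSelfAdjoint ((φ 1 : B) * (φ 1 : B) - 1) := by
      have h := (φ 1).2.star_eq
      simp only [IsSelfAdjoint, star_sub, star_one, star_mul, h]
    exact sub_eq_zero.mp (aux_eq_zero hsa2 hsub)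
  refine ⟨(φ 1).2, s2, fun b => ?_⟩
  set s := (φ 1 : B) with hsdef
  have hstar : star s = s := (φ 1).2.star_eq
  -- key claim: `(1+s) * x * (1-s) = 0` for every `x`
  have key : ∀ x : B, (1 + s) * x * (1 - s) = 0 := by
    intro x
    set y := (1 + s) * x * (1 - s) with hy
    have hystar : star y = (1 - s) * star x * (1 + s) := by
      simp [hy, star_mul, hstar, mul_assoc]
    have hc : IsSelfAdjoint (y + star y) := by
      simp only [IsSelfAdjoint, star_add, star_star]; exact add_comm _ _
    have e1 : s * (1 + s) = 1 + s := by rw [mul_add, mul_one, s2, add_comm]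
    have e2 : s * (1 - s) = -(1 - s) := by rw [mul_sub, mul_one, s2]; exact (neg_sub _ _).symm
    have h1 : s * y = y := by
      calc s * ((1 + s) * x * (1 - s)) = (s * (1 + s)) * (x * (1 - s)) := by
            rw [mul_assoc, mul_assoc]
        _ = (1 + s) * (x * (1 - s)) := by rw [e1]
        _ = y := by rw [hy, mul_assoc]
    have h2 : s * star y = -star y := by
      rw [hystar]
      calc s * ((1 - s) * star x * (1 + s)) = (s * (1 - s)) * (star x * (1 + s)) := by
            rw [mul_assoc, mul_assoc]
        _ = -((1 - s) * (star x * (1 + s))) := by rw [e2, neg_mul]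
        _ = -((1 - s) * star x * (1 + s)) := by rw [mul_assoc]
    have hk : s * (y + star y) = y - star y := by
      rw [mul_add, h1, h2]; abel
    have hkreal : ∀ z ∈ spectrum ℂ (y - star y), z = z.re := by
      intro z hz
      refine hreal ⟨y + star y, hc⟩ z ?_
      show z ∈ spectrum ℂ (s * (y + star y))
      rw [hk]; exact hz
    have hskew : star (y - star y) = -(y - star y) := by
      simp [star_sub]
    have hIk : IsSelfAdjoint (Complex.I • (y - star y)) := by
      simp only [IsSelfAdjoint, star_smul, Complex.star_def, Complex.conj_I, hskew,
        neg_smul, smul_neg, neg_neg]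
    have hsub : spectrum ℂ (Complex.I • (y - star y)) ⊆ {0} := by
      intro w hw
      have hwre : w = w.re := hIk.mem_spectrum_eq_re hw
      have hmem : (-Complex.I) * w ∈ spectrum ℂ (y - star y) := by
        rw [← spectrum.smul_mem_smul_iff (r := Units.mk0 Complex.I Complex.I_ne_zero)]
        have hs1 : (Units.mk0 Complex.I Complex.I_ne_zero) • ((-Complex.I) * w) = w := by
          rw [Units.smul_def]
          simp only [Units.val_mk0, smul_eq_mul]
          ring_nf
          simp [Complex.I_sq]
        have hs2' : (Units.mk0 Complex.I Complex.I_ne_zero) • (y - star y)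
            = Complex.I • (y - star y) := by rw [Units.smul_def]; rfl
        rw [hs1, hs2']; exact hw
      have hmre := hkreal _ hmem
      have him : w.im = 0 := by
        have := congrArg Complex.im hwre; simpa using this
      have hre : w.re = 0 := by
        have := congrArg Complex.im hmre
        simp [Complex.mul_im, him] at this
        simpa using this
      show w ∈ ({0} : Set ℂ)
      simp [Complex.ext_iff, him, hre]
    have hIk0 : Complex.I • (y - star y) = 0 := aux_eq_zero hIk hsub
    have hyeq : y = star y := by
      have hk0 : y - star y = 0 := by
        rcases smul_eq_zero.mp hIk0 with h | h
        · exact absurd h Complex.I_ne_zero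
        · exact h
      exact sub_eq_zero.mp hk0
    -- the factor-4 trick
    have huv : (1 + s) * (1 - s) = 0 := by
      have h : (1 + s) * (1 - s) = 1 - s * s := by noncomm_ring
      rw [h, s2, sub_self]
    have h40 : (1 + s) * y * (1 - s) = 0 := by
      rw [hyeq, hystar]
      calc (1 + s) * ((1 - s) * star x * (1 + s)) * (1 - s)
          = ((1 + s) * (1 - s)) * star x * ((1 + s) * (1 - s)) := by simp only [mul_assoc]
        _ = 0 := by rw [huv]; simp
    have huu : (1 + s) * (1 + s) = (1 + s) + (1 + s) := by
      have h : (1 + s) * (1 + s) = s * s + (s + s + 1) := by noncomm_ring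
      rw [h, s2]; abel
    have hvv : (1 - s) * (1 - s) = (1 - s) + (1 - s) := by
      have h : (1 - s) * (1 - s) = s * s + (1 - s - s) := by noncomm_ring
      rw [h, s2]; abel
    have h4 : (1 + s) * y * (1 - s) = y + y + y + y := by
      calc (1 + s) * y * (1 - s)
          = ((1 + s) * (1 + s)) * x * ((1 - s) * (1 - s)) := by rw [hy]; simp only [mul_assoc]
        _ = y + y + y + y := by
            rw [huu, hvv, hy]
            simp only [add_mul, mul_add, mul_assoc]
            abel
    have hsum : y + y + y + y = 0 := by rw [← h4, h40]
    have h4s : (4 : ℂ) • y = 0 := by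
      rw [show (4 : ℂ) = 1 + 1 + 1 + 1 by norm_num, add_smul, add_smul, add_smul, one_smul]
      simpa using hsum
    rcases smul_eq_zero.mp h4s with h | h
    · norm_num at h
    · exact h
  have key2 : ∀ x : B, (1 - s) * x * (1 + s) = 0 := by
    intro x
    have h := congrArg star (key (star x))
    simpa [star_mul, hstar, mul_assoc] using h
  have e1 := key b
  have e2 := key2 b
  have e3 : s * b + s * b = b * s + b * s := by
    have hiden : ((1 + s) * b * (1 - s)) - ((1 - s) * b * (1 + s))
        = (s * b + s * b) - (b * s + b * s) := by noncomm_ring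
    rw [e1, e2] at hiden
    have h0 : (s * b + s * b) - (b * s + b * s) = 0 := by rw [← hiden]; simp
    exact sub_eq_zero.mp h0
  have e4 : (2 : ℂ) • (s * b) = (2 : ℂ) • (b * s) := by
    simpa [two_smul] using e3
  exact smul_right_injective B (by norm_num : (2 : ℂ) ≠ 0) e4
end

section
/- Let A be a unital C*-algebra and let p, q ∈ A be positive invertible elements. If σ(pq) = {1}, then q = p⁻¹. -/
/-- If `p, q` are positive invertible elements of a unital C*-algebra and
`σ(pq) = {1}`, then `q = p⁻¹`. -/
theorem eq_inverse_of_spectrum_mul_eq_one {A : Type*} [CStarAlgebra A]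
    [PartialOrder A] [StarOrderedRing A] (p q : A)
    (hp : 0 ≤ p) (hp' : IsUnit p) (hq : 0 ≤ q) (hq' : IsUnit q)
    (h : spectrum ℂ (p * q) = {1}) :
    q = Ring.inverse p := by
  set s := CFC.sqrt p with hs
  have hss : s * s = p := CFC.sqrt_mul_sqrt_self p hp
  have hs0 : 0 ≤ s := CFC.sqrt_nonneg (a := p)
  obtain ⟨v, hv⟩ := hp'
  have hcomm : Commute s (↑v⁻¹ : A) := by
    have : Commute s (↑v : A) := by
      rw [hv, ← hss]; exact (Commute.refl s).mul_right (Commute.refl s)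
    exact this.units_inv_right
  -- s is a unit
  let u : Aˣ := ⟨s, s * ↑v⁻¹,
    by rw [← mul_assoc, hss, ← hv, Units.mul_inv],
    by rw [mul_assoc, ← hcomm.eq, ← mul_assoc, hss, ← hv, Units.mul_inv]⟩
  -- conjugate p*q by u
  have hconj : spectrum ℂ (↑u⁻¹ * (p * q) * ↑u) = {1} := by
    rw [spectrum.units_conjugate']
    exact h
  have huinv : (↑u⁻¹ : A) * p = s := by
    have h1 : (↑u⁻¹ : A) * s = 1 := u.inv_val
    rw [← hss, ← mul_assoc, h1, one_mul]
  have key : s * q * s = 1 := by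
    have ha : (↑u⁻¹ : A) * (p * q) * ↑u = s * q * s := by
      rw [← mul_assoc, huinv]
    rw [ha] at hconj
    have hpos : 0 ≤ s * q * s := by
      have := star_left_conjugate_nonneg (a := q) hq s
      simpa [(IsSelfAdjoint.of_nonneg hs0).star_eq] using this
    have hsa : IsSelfAdjoint (s * q * s) := .of_nonneg hpos
    have hnormal : IsStarNormal (s * q * s) := hsa.isStarNormal
    calc s * q * s = cfc (id : ℂ → ℂ) (s * q * s) := (cfc_id ℂ (s * q * s)).symm
      _ = cfc (fun _ : ℂ => (1 : ℂ)) (s * q * s) := by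
          apply cfc_congr
          intro z hz
          rw [hconj] at hz
          simpa using hz
      _ = 1 := by rw [cfc_const_one ℂ (s * q * s)]
  have hpq : p * q = 1 := by
    have hsu1 : s * (↑u⁻¹ : A) = 1 := u.val_inv
    calc p * q = s * s * q * (s * ↑u⁻¹) := by rw [hsu1, mul_one, hss]
      _ = s * (s * q * s) * ↑u⁻¹ := by noncomm_ring
      _ = 1 := by rw [key, mul_one, hsu1]
  have h2 : Ring.inverse p * (p * q) = Ring.inverse p := by rw [hpq, mul_one]
  rwa [← mul_assoc, Ring.inverse_mul_cancel p ⟨v, hv⟩, one_mul] at h2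
end

section
/- Let A and B be unital C*-algebras and let φ be a surjective map from the set of self-adjoint elements of A onto the set of self-adjoint elements of B satisfying σ(φ(a)φ(b)) = σ(ab) for all self-adjoint a, b ∈ A. Define T(x) = φ(1)·φ(x) for self-adjoint x ∈ A. Then for every positive invertible x ∈ A and every real t > 0, T(t·x) = t·T(x). -/
open scoped Pointwise

lemma my_smul_spec {A : Type*} [CStarAlgebra A] (k : ℂ) (hk : k ≠ 0) (m : A) :
    spectrum ℂ (k • m) = k • spectrum ℂ m := by
  have h := spectrum.unit_smul_eq_smul m (Units.mk0 k hk)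
  have h1 : (Units.mk0 k hk) • m = k • m := rfl
  have h2 : (Units.mk0 k hk) • spectrum ℂ m = k • spectrum ℂ m := rfl
  rw [← h1, ← h2, h]

open scoped Pointwise

lemma my_pt {r : ℝ} (hr : r ≠ 0) :
    (Real.sqrt |r|)⁻¹ * Real.sqrt |r| = 1 ∧
    ((Real.sqrt |r|)⁻¹ * r * (Real.sqrt |r|)⁻¹) * ((Real.sqrt |r|)⁻¹ * r * (Real.sqrt |r|)⁻¹) = 1 ∧
    (Real.sqrt |r|)⁻¹ * ((Real.sqrt |r|)⁻¹ * r * (Real.sqrt |r|)⁻¹) * (Real.sqrt |r|)⁻¹ = r⁻¹ ∧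
    Real.sqrt |r| * ((Real.sqrt |r|)⁻¹ * r * (Real.sqrt |r|)⁻¹) * Real.sqrt |r| = r ∧
    ((Real.sqrt |r|)⁻¹ * r * (Real.sqrt |r|)⁻¹ = 1 ∨ (Real.sqrt |r|)⁻¹ * r * (Real.sqrt |r|)⁻¹ = -1) := by
  have hs : Real.sqrt |r| ≠ 0 := Real.sqrt_ne_zero'.mpr (abs_pos.mpr hr)
  have hss : Real.sqrt |r| * Real.sqrt |r| = |r| := Real.mul_self_sqrt (abs_nonneg r)
  have habs : |r| ≠ 0 := abs_ne_zero.mpr hr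
  have hval : (Real.sqrt |r|)⁻¹ * r * (Real.sqrt |r|)⁻¹ = r * |r|⁻¹ := by
    rw [show (Real.sqrt |r|)⁻¹ * r * (Real.sqrt |r|)⁻¹
      = r * (Real.sqrt |r| * Real.sqrt |r|)⁻¹ by ring, hss]
  refine ⟨inv_mul_cancel₀ hs, ?_, ?_, ?_, ?_⟩
  · rw [hval]
    rw [show r * |r|⁻¹ * (r * |r|⁻¹) = (r * r) * (|r| * |r|)⁻¹ by ring, abs_mul_abs_self]
    exact mul_inv_cancel₀ (mul_ne_zero hr hr)
  · rw [hval]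
    rw [show (Real.sqrt |r|)⁻¹ * (r * |r|⁻¹) * (Real.sqrt |r|)⁻¹
      = (r * |r|⁻¹) * (Real.sqrt |r| * Real.sqrt |r|)⁻¹ by ring, hss]
    rw [show r * |r|⁻¹ * |r|⁻¹ = r * (|r| * |r|)⁻¹ by ring, abs_mul_abs_self]
    rw [mul_inv, ← mul_assoc, mul_inv_cancel₀ hr, one_mul]
  · rw [hval]
    rw [show Real.sqrt |r| * (r * |r|⁻¹) * Real.sqrt |r|
      = (r * |r|⁻¹) * (Real.sqrt |r| * Real.sqrt |r|) by ring, hss]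
    field_simp
  · rw [hval]
    rcases abs_cases r with ⟨h, _⟩ | ⟨h, _⟩
    · left; rw [h]; exact mul_inv_cancel₀ hr
    · right; rw [h]
      rw [inv_neg, mul_neg, mul_inv_cancel₀ hr]

lemma my_isUnit_of_isUnit_mul_self {B : Type*} [Ring B] {u : B} (h : IsUnit (u * u)) :
    IsUnit u := by
  set w : B := ↑h.unit⁻¹ with hw
  have hw1 : u * u * w = 1 := h.mul_val_inv
  have hw2 : w * (u * u) = 1 := h.val_inv_mul
  have hr : u * (u * w) = 1 := by rw [← mul_assoc]; exact hw1
  have hl : (w * u) * u = 1 := by rw [mul_assoc]; exact hw2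
  have hkey : w * u = u * w := by
    calc w * u = (w * u) * (u * (u * w)) := by rw [hr, mul_one]
    _ = ((w * u) * u) * (u * w) := by simp only [mul_assoc]
    _ = u * w := by rw [hl, one_mul]
  exact ⟨⟨u, u * w, hr, by rw [← hkey]; exact hl⟩, rfl⟩

lemma my_mem_spec_swap {B : Type*} [Ring B] [Algebra ℂ B] {a b : B} {z : ℂ} (hz : z ≠ 0)
    (h : z ∈ spectrum ℂ (a * b)) : z ∈ spectrum ℂ (b * a) := by
  have := spectrum.unit_mem_mul_comm (a := a) (b := b) (r := Units.mk0 z hz)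
  simpa using this.mp (by simpa using h)

lemma my_eq_one_of_unitary_spectrum {B : Type*} [CStarAlgebra B] {q : B}
    (h1 : star q * q = 1) (h2 : q * star q = 1) (hσ : spectrum ℂ q ⊆ {1}) : q = 1 := by
  have hn : IsStarNormal q := ⟨by rw [Commute, SemiconjBy, h1, h2]⟩
  conv_lhs => rw [← cfc_id ℂ q]
  rw [cfc_congr (f := (id : ℂ → ℂ)) (g := fun _ => (1 : ℂ)) (fun z hz => hσ hz),
    cfc_const_one ℂ q]

lemma my_aux {B : Type*} [CStarAlgebra B] [Nontrivial B] (u v : B) (t : ℝ) (ht : 0 < t)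
    (hu_sa : IsSelfAdjoint u) (hv_sa : IsSelfAdjoint v)
    (huu : IsUnit (u * u))
    (key : ∀ d : B, IsSelfAdjoint d → spectrum ℂ (d * v) = (t : ℂ) • spectrum ℂ (d * u)) :
    v = t • u := by
  have htC : (t : ℂ) ≠ 0 := by exact_mod_cast ht.ne'
  have hu : IsUnit u := my_isUnit_of_isUnit_mul_self huu
  have h0S : ∀ r ∈ spectrum ℝ u, r ≠ 0 := by
    intro r hr h
    exact (spectrum.zero_notMem ℝ hu) (h ▸ hr)
  -- functions
  set g : ℝ → ℝ := fun r => (Real.sqrt |r|)⁻¹ with hgdef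
  set g' : ℝ → ℝ := fun r => Real.sqrt |r| with hg'def
  set fe : ℝ → ℝ := fun r => g r * r * g r with hfedef
  have hg'c : ContinuousOn g' (spectrum ℝ u) :=
    (Real.continuous_sqrt.comp continuous_abs).continuousOn
  have hgc : ContinuousOn g (spectrum ℝ u) := hg'c.inv₀ fun r hr =>
    Real.sqrt_ne_zero'.mpr (abs_pos.mpr (h0S r hr))
  have hfec : ContinuousOn fe (spectrum ℝ u) := (hgc.mul continuousOn_id).mul hgc
  have hinvc : ContinuousOn (fun r : ℝ => r⁻¹) (spectrum ℝ u) := continuousOn_id.inv₀ h0S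
  -- elements
  set c : B := cfc g u with hcdef
  set c' : B := cfc g' u with hc'def
  set e : B := cfc fe u with hedef
  set u' : B := cfc (fun r : ℝ => r⁻¹) u with hu'def
  have hid : cfc (id : ℝ → ℝ) u = u := cfc_id ℝ u hu_sa
  have hc_sa : IsSelfAdjoint c := cfc_predicate g u
  have hc'_sa : IsSelfAdjoint c' := cfc_predicate g' u
  have he_sa : IsSelfAdjoint e := cfc_predicate fe u
  have hu'_sa : IsSelfAdjoint u' := cfc_predicate _ u
  -- helper: right/left multiplication by u
  have hmulr : ∀ f : ℝ → ℝ, ContinuousOn f (spectrum ℝ u) →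
      cfc f u * u = cfc (fun r => f r * r) u := by
    intro f hf
    have h := cfc_mul f id u hf continuousOn_id
    rw [hid] at h
    exact h.symm
  -- multiplication: c * u * c = e
  have hcuc : c * u * c = e := by
    rw [hcdef, hmulr g hgc, hedef]
    exact (cfc_mul _ g u (hgc.mul continuousOn_id) hgc).symm
  -- e * e = 1
  have hee : e * e = 1 := by
    rw [hedef, ← cfc_mul fe fe u hfec hfec]
    rw [cfc_congr (g := fun _ : ℝ => (1 : ℝ)) fun r hr => (my_pt (h0S r hr)).2.1]
    exact cfc_const_one ℝ u hu_sa
  -- c * c * u = e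
  have hccu : c * c * u = e := by
    rw [hcdef, ← cfc_mul g g u hgc hgc, hmulr (fun x => g x * g x) (hgc.mul hgc), hedef]
    exact cfc_congr fun r hr => by ring
  -- c * e * c = u'
  have hcec : c * e * c = u' := by
    rw [hedef, hcdef, ← cfc_mul g fe u hgc hfec, ← cfc_mul (fun x => g x * fe x) g u (hgc.mul hfec) hgc, hu'def]
    exact cfc_congr fun r hr => (my_pt (h0S r hr)).2.2.1
  -- c' * e * c' = u
  have hc'ec' : c' * e * c' = u := by
    rw [hedef, hc'def, ← cfc_mul g' fe u hg'c hfec, ← cfc_mul (fun x => g' x * fe x) g' u (hg'c.mul hfec) hg'c]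
    conv_rhs => rw [← hid]
    exact cfc_congr fun r hr => (my_pt (h0S r hr)).2.2.2.1
  -- c * c' = 1, c' * c = 1
  have hcc' : c * c' = 1 := by
    rw [hcdef, hc'def, ← cfc_mul g g' u hgc hg'c]
    rw [cfc_congr (g := fun _ : ℝ => (1 : ℝ)) fun r hr => (my_pt (h0S r hr)).1]
    exact cfc_const_one ℝ u hu_sa
  have hc'c : c' * c = 1 := by
    rw [hcdef, hc'def, ← cfc_mul g' g u hg'c hgc]
    rw [cfc_congr (g := fun _ : ℝ => (1 : ℝ)) fun r hr => by
      rw [mul_comm]; exact (my_pt (h0S r hr)).1]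
    exact cfc_const_one ℝ u hu_sa
  -- u' * u = 1 and u * u' = 1
  have hu'u : u' * u = 1 := by
    rw [hu'def, hmulr _ hinvc]
    rw [cfc_congr (g := fun _ : ℝ => (1 : ℝ)) fun r hr => inv_mul_cancel₀ (h0S r hr)]
    exact cfc_const_one ℝ u hu_sa
  -- spectrum of e
  have he_spec : spectrum ℂ e ⊆ {(1 : ℂ), -1} := by
    have h1 : spectrum ℝ e = fe '' spectrum ℝ u := by
      rw [hedef]; exact cfc_map_spectrum fe u hu_sa hfec
    have h2 : spectrum ℂ e = (fun r : ℝ => (r : ℂ)) '' spectrum ℝ e := by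
      have h3 := he_sa.spectrumRestricts.algebraMap_image
      rw [← h3]
      rfl
    rw [h2, h1]
    rintro z ⟨r, ⟨s, hs, rfl⟩, rfl⟩
    rcases (my_pt (h0S s hs)).2.2.2.2 with h | h
    · left
      show ((fe s : ℝ) : ℂ) = 1
      rw [show fe s = (1 : ℝ) from h]; norm_num
    · right
      rw [Set.mem_singleton_iff]
      show ((fe s : ℝ) : ℂ) = -1
      rw [show fe s = (-1 : ℝ) from h]; norm_num
  -- units
  have hcU : IsUnit c := ⟨⟨c, c', hcc', hc'c⟩, rfl⟩
  have hc'U : IsUnit c' := ⟨⟨c', c, hc'c, hcc'⟩, rfl⟩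
  have heU : IsUnit e := ⟨⟨e, e, hee, hee⟩, rfl⟩
  have hcc_sa : IsSelfAdjoint (c * c) := by
    rw [IsSelfAdjoint, star_mul, hc_sa.star_eq]
  have ha_sa : IsSelfAdjoint (c * v * c) := by
    rw [IsSelfAdjoint, star_mul, star_mul, hc_sa.star_eq, hv_sa.star_eq, mul_assoc]
  -- spectrum of (c*c)*v
  have hccv_spec : spectrum ℂ (c * c * v) ⊆ {(t : ℂ), -(t : ℂ)} := by
    rw [key (c * c) hcc_sa, hccu]
    intro z hz
    obtain ⟨y, hy, rfl⟩ := Set.mem_smul_set.mp hz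
    rcases he_spec hy with h | h
    · left; rw [h]; simp
    · right; rw [h]; simp
  have hccvU : IsUnit (c * c * v) := by
    apply spectrum.isUnit_of_zero_notMem (R := ℂ)
    intro h0
    rcases hccv_spec h0 with h | h
    · exact htC h.symm
    · rw [Set.mem_singleton_iff] at h
      exact htC (neg_eq_zero.mp h.symm)
  have hvU : IsUnit v := by
    have hv2 : c' * (c' * (c * c * v)) = v := by
      have h1 : c' * (c * c * v) = c * v := by
        rw [show c' * (c * c * v) = (c' * c) * (c * v) by noncomm_ring, hc'c, one_mul]
      rw [h1, ← mul_assoc, hc'c, one_mul]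
    rw [← hv2]
    exact hc'U.mul (hc'U.mul hccvU)
  have haU : IsUnit (c * v * c) := (hcU.mul hvU).mul hcU
  -- real spectrum of a := c*v*c
  have haR : ∀ r ∈ spectrum ℝ (c * v * c), r = t ∨ r = -t := by
    intro r hr
    have hr0 : r ≠ 0 := fun h => (spectrum.zero_notMem ℝ haU) (h ▸ hr)
    have hrC : (r : ℂ) ∈ spectrum ℂ (c * v * c) := by
      rw [← ha_sa.spectrumRestricts.algebraMap_image]
      exact ⟨r, hr, rfl⟩
    have hswap : ((r : ℂ)) ∈ spectrum ℂ (c * c * v) := by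
      have hr0C : (r : ℂ) ≠ 0 := by exact_mod_cast hr0
      rw [mul_assoc] at hrC
      have h1 := my_mem_spec_swap hr0C hrC
      rw [mul_assoc] at h1
      exact my_mem_spec_swap hr0C h1
    rcases hccv_spec hswap with h | h
    · left; exact_mod_cast h
    · right; rw [Set.mem_singleton_iff] at h
      exact_mod_cast h
  -- a * a = (t*t) • 1
  have haa : (c * v * c) * (c * v * c) = ((t : ℂ) * (t : ℂ)) • (1 : B) := by
    have h1 := cfc_mul (id : ℝ → ℝ) (id : ℝ → ℝ) (c * v * c)
      continuousOn_id continuousOn_id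
    rw [cfc_id ℝ (c * v * c) ha_sa] at h1
    rw [← h1]
    rw [cfc_congr (g := fun _ : ℝ => t * t) fun r hr => by
      rcases haR r hr with h | h <;> rw [h] <;> simp [id] <;> ring]
    rw [cfc_const (t * t) (c * v * c) ha_sa, Algebra.algebraMap_eq_smul_one]
    have hconv : ((t * t : ℝ)) • (1 : B) = ((t : ℂ) * (t : ℂ)) • (1 : B) := by
      rw [← algebraMap_smul (R := ℝ) (A := ℂ) (M := B) (t * t) (1 : B)]
      norm_num
    exact hconv
  -- w := e * (c*v*c)
  set a : B := c * v * c with hadef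
  set w : B := e * a with hwdef
  have hwstar : star w = a * e := by
    rw [hwdef, star_mul, he_sa.star_eq, ha_sa.star_eq]
  have hw1 : w * star w = ((t : ℂ) * (t : ℂ)) • (1 : B) := by
    rw [hwstar, hwdef, show (e * a) * (a * e) = e * ((a * a) * e) by noncomm_ring, haa]
    rw [smul_mul_assoc, one_mul, mul_smul_comm, hee]
  have hw2 : star w * w = ((t : ℂ) * (t : ℂ)) • (1 : B) := by
    rw [hwstar, hwdef, show (a * e) * (e * a) = a * ((e * e) * a) by noncomm_ring, hee,
      one_mul, haa]
  have hwU : IsUnit w := heU.mul haU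
  have hw_spec : spectrum ℂ w ⊆ {(t : ℂ)} := by
    intro z hz
    have hz0 : z ≠ 0 := fun h => (spectrum.zero_notMem ℂ hwU) (h ▸ hz)
    have h1 := my_mem_spec_swap hz0 hz
    rw [show a * e = (c * v) * (c * e) by rw [hadef]; noncomm_ring] at h1
    have h2 := my_mem_spec_swap hz0 h1
    rw [show (c * e) * (c * v) = (c * e * c) * v by noncomm_ring, hcec,
      key u' hu'_sa, hu'u, spectrum.one_eq] at h2
    obtain ⟨y, hy, rfl⟩ := Set.mem_smul_set.mp h2
    rw [Set.mem_singleton_iff] at hy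
    rw [hy]
    simp
  have hstar_t : star (((t : ℂ))⁻¹) = ((t : ℂ))⁻¹ := by
    simp [Complex.star_def, map_inv₀, Complex.conj_ofReal]
  have hq : ((t : ℂ))⁻¹ • w = 1 := by
    apply my_eq_one_of_unitary_spectrum
    · rw [star_smul, hstar_t, smul_mul_smul_comm, hw2, smul_smul]
      rw [show ((t : ℂ))⁻¹ * ((t : ℂ))⁻¹ * ((t : ℂ) * (t : ℂ)) = 1 by field_simp, one_smul]
    · rw [star_smul, hstar_t, smul_mul_smul_comm, hw1, smul_smul]
      rw [show ((t : ℂ))⁻¹ * ((t : ℂ))⁻¹ * ((t : ℂ) * (t : ℂ)) = 1 by field_simp, one_smul]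
    · intro z hz
      have hrw : (((t : ℂ))⁻¹ • w) = (Units.mk0 (((t : ℂ))⁻¹) (inv_ne_zero htC)) • w := rfl
      rw [hrw, spectrum.unit_smul_eq_smul] at hz
      obtain ⟨y, hy, rfl⟩ := Set.mem_smul_set.mp hz
      have hy' := hw_spec hy
      rw [Set.mem_singleton_iff] at hy'
      rw [hy']
      simp [Units.smul_def, inv_mul_cancel₀ htC]
  have hw_eq : w = (t : ℂ) • (1 : B) := by
    calc w = (t : ℂ) • ((((t : ℂ))⁻¹) • w) := by
          rw [smul_smul, mul_inv_cancel₀ htC, one_smul]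
    _ = (t : ℂ) • (1 : B) := by rw [hq]
  have ha_eq : a = (t : ℂ) • e := by
    have h1 : e * w = a := by rw [hwdef, ← mul_assoc, hee, one_mul]
    rw [← h1, hw_eq, mul_smul_comm, mul_one]
  have hv3 : c' * a * c' = v := by
    rw [hadef, show c' * (c * v * c) * c' = (c' * c) * (v * (c * c')) by noncomm_ring,
      hc'c, hcc', one_mul, mul_one]
  have hfin : v = (t : ℂ) • u := by
    rw [← hv3, ha_eq, mul_smul_comm, smul_mul_assoc, hc'ec']
  rw [hfin, ← algebraMap_smul (R := ℝ) (A := ℂ) (M := B) t u]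
  norm_num


/-- If `φ` is a surjective map between the self-adjoint parts of unital
C*-algebras with `σ(φ(a)φ(b)) = σ(ab)`, and `T(x) = φ(1)·φ(x)`, then `T` is positively
homogeneous on positive invertible elements: `T(t • x) = t • T(x)` for `t > 0`. -/
theorem image_smul_of_spectrum_mul_eq {A B : Type*} [CStarAlgebra A] [CStarAlgebra B]
    [PartialOrder A] [StarOrderedRing A]
    (φ : selfAdjoint A → selfAdjoint B) (hsurj : Function.Surjective φ)
    (hφ : ∀ a b : selfAdjoint A,
      spectrum ℂ ((φ a : B) * (φ b : B)) = spectrum ℂ ((a : A) * (b : A))) :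
    ∀ x : selfAdjoint A, 0 ≤ (x : A) → IsUnit (x : A) → ∀ t : ℝ, 0 < t →
      (φ 1 : B) * (φ (t • x) : B) = t • ((φ 1 : B) * (φ x : B)) := by
  intro x hx hxU t ht
  rcases subsingleton_or_nontrivial B with hB | hB
  · exact Subsingleton.elim _ _
  have htC : (t : ℂ) ≠ 0 := by exact_mod_cast ht.ne'
  have huu : IsUnit ((φ x : B) * (φ x : B)) := by
    apply spectrum.isUnit_of_zero_notMem (R := ℂ)
    rw [hφ x x]
    exact spectrum.zero_notMem ℂ (hxU.mul hxU)
  have key : ∀ d : B, IsSelfAdjoint d →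
      spectrum ℂ (d * (φ (t • x) : B)) = (t : ℂ) • spectrum ℂ (d * (φ x : B)) := by
    intro d hd
    obtain ⟨a, ha⟩ := hsurj ⟨d, hd⟩
    have hd' : d = (φ a : B) := by rw [ha]
    rw [hd', hφ a (t • x), hφ a x]
    have h1 : ((a : A) * ((t • x : selfAdjoint A) : A)) = (t : ℂ) • ((a : A) * (x : A)) := by
      rw [selfAdjoint.val_smul, mul_smul_comm,
        ← algebraMap_smul (R := ℝ) (A := ℂ) (M := A) t ((a : A) * (x : A))]
      norm_num
    rw [h1, my_smul_spec (t : ℂ) htC]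
  have hfin := my_aux (φ x : B) (φ (t • x) : B) t ht (φ x).2 (φ (t • x)).2 huu key
  rw [hfin, mul_smul_comm]
end

section
/- Let A and B be unital C*-algebras and let φ be a surjective map from the set of self-adjoint elements of A onto the set of self-adjoint elements of B satisfying σ(φ(a)φ(b)) = σ(ab) for all self-adjoint a, b ∈ A. Define T(x) = φ(1)·φ(x) for self-adjoint x ∈ A. Then for all positive invertible x, y ∈ A, the elements T(x) and T(y) are positive invertible in B, T(x⁻¹) = T(x)⁻¹, and σ(x^{-1/2} y x^{-1/2}) = σ(T(x)^{-1/2} T(y) T(x)^{-1/2}). -/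
section Helpers
variable {C : Type*} [CStarAlgebra C]

lemma my_sa_eq_zero {s : C} (hs : IsSelfAdjoint s) (h : spectrum ℂ s ⊆ {0}) : s = 0 := by
  have h1 : spectralRadius ℂ s = 0 := by
    rw [spectralRadius]
    refine le_antisymm (iSup₂_le fun k hk => ?_) zero_le
    have : k = 0 := h hk
    simp [this]
  rw [hs.spectralRadius_eq_nnnorm] at h1
  have : ‖s‖₊ = 0 := by exact_mod_cast h1
  simpa using this

lemma my_sa_eq_one {s : C} (hs : IsSelfAdjoint s) (h : spectrum ℂ s = {1}) : s = 1 := by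
  have h1 : IsSelfAdjoint (s - 1) := hs.sub (IsSelfAdjoint.one C)
  have h2 : spectrum ℂ (s - 1) ⊆ {0} := by
    have := spectrum.sub_singleton_eq s (1 : ℂ)
    rw [h] at this
    rw [map_one] at this
    rw [← this]
    intro z hz
    simp only [Set.singleton_sub_singleton, sub_self] at hz
    exact hz
  have := my_sa_eq_zero h1 h2
  rwa [sub_eq_zero] at this

lemma my_swap {a b : C} (ha : IsUnit a) : spectrum ℂ (a * b) = spectrum ℂ (b * a) := by
  ext z
  rcases eq_or_ne z 0 with rfl | hz
  · rw [← not_iff_not]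
    simp only [spectrum.zero_notMem_iff]
    constructor
    · intro h
      rcases ha with ⟨u, rfl⟩
      have hb : IsUnit b := (Units.isUnit_units_mul u b).mp h
      exact hb.mul (u : Cˣ).isUnit
    · intro h
      rcases ha with ⟨u, rfl⟩
      have hb : IsUnit b := (Units.isUnit_mul_units b u).mp h
      exact ((u : Cˣ).isUnit).mul hb
  · exact spectrum.unit_mem_mul_comm (r := Units.mk0 z hz)

end Helpers

section Helpers2
variable {C : Type*} [CStarAlgebra C] [PartialOrder C] [StarOrderedRing C]

lemma my_nonneg_of_spec {s : C} (hs : IsSelfAdjoint s)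
    (h : ∀ z ∈ spectrum ℂ s, 0 ≤ z.re) : 0 ≤ s := by
  rw [StarOrderedRing.nonneg_iff_spectrum_nonneg (R := ℝ) s hs]
  intro x hx
  have hx' : (algebraMap ℝ ℂ x) ∈ spectrum ℂ s := spectrum.algebraMap_mem ℂ hx
  simpa using h _ hx'

lemma my_isUnit_sqrt {u : C} (hu : 0 ≤ u) (huu : IsUnit u) : IsUnit (CFC.sqrt u) := by
  set s := CFC.sqrt u with hs
  have hss : s * s = u := CFC.sqrt_mul_sqrt_self u hu
  rcases huu with ⟨e, he⟩
  have hcomm : Commute s (e : C) := by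
    rw [he, ← hss]; exact (Commute.refl s).mul_right (Commute.refl s)
  have h1 : s * (s * ↑e⁻¹) = 1 := by rw [← mul_assoc, hss, ← he, e.mul_inv]
  have h2 : (s * ↑e⁻¹) * s = 1 := by
    rw [mul_assoc, ← (hcomm.units_inv_right).eq, ← mul_assoc, hss, ← he, e.mul_inv]
  exact ⟨⟨s, s * ↑e⁻¹, h1, h2⟩, rfl⟩

/-- positive invertibles whose product has spectrum `{1}` are mutually inverse. -/
lemma my_pos_inv_unique {u v : C} (hu : 0 ≤ u) (huu : IsUnit u) (hv : 0 ≤ v) (hvu : IsUnit v)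
    (h : spectrum ℂ (u * v) = {1}) : u * v = 1 := by
  set s := CFC.sqrt u with hs
  have hss : s * s = u := CFC.sqrt_mul_sqrt_self u hu
  have hsu : IsUnit s := my_isUnit_sqrt hu huu
  have hs0 : 0 ≤ s := CFC.sqrt_nonneg (a := u)
  have hssa : IsSelfAdjoint s := IsSelfAdjoint.of_nonneg hs0
  have hvsa : IsSelfAdjoint v := IsSelfAdjoint.of_nonneg hv
  have hspec : spectrum ℂ (s * (v * s)) = {1} := by
    rw [my_swap hsu, mul_assoc, hss, my_swap hvu, h]
  have hsa2 : IsSelfAdjoint (s * (v * s)) := by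
    rw [IsSelfAdjoint, star_mul, star_mul, hssa.star_eq, hvsa.star_eq, ← mul_assoc,
      mul_assoc]
  have h1 : s * (v * s) = 1 := my_sa_eq_one hsa2 hspec
  rcases hsu with ⟨S, hS⟩
  have hv' : v = ↑S⁻¹ * ↑S⁻¹ := by
    have := congrArg (fun t => (↑S⁻¹ : C) * t * ↑S⁻¹) h1
    simpa [← hS, mul_assoc, ← mul_assoc, S.inv_mul, S.mul_inv] using this
  calc u * v = s * (s * ↑S⁻¹) * ↑S⁻¹ := by rw [hv', ← hss, ← hS]; noncomm_ring
    _ = 1 := by rw [← hS, S.mul_inv, mul_one, S.mul_inv]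

end Helpers2

section Central
variable {C : Type*} [CStarAlgebra C]

lemma my_double_zero {d : C} (h : d + d = 0) : d = 0 := by
  have h2 : (2 : ℂ) • d = 0 := by rw [two_smul]; exact h
  rcases smul_eq_zero.mp h2 with h | h
  · exact absurd h two_ne_zero
  · exact h

lemma my_central {J : C} (hJsa : IsSelfAdjoint J) (hJ2 : J * J = 1)
    (hreal : ∀ k : C, IsSelfAdjoint k → ∀ z ∈ spectrum ℂ (J * k), z.im = 0)
    {k : C} (hk : IsSelfAdjoint k) : J * k = k * J := by
  have hJ1 : J * (1 + J) = 1 + J := by rw [mul_add, mul_one, hJ2, add_comm]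
  have hJ1' : J * (1 - J) = -(1 - J) := by rw [mul_sub, mul_one, hJ2, neg_sub]
  set c := (1 + J) * k * (1 - J) with hc
  have hcstar : star c = (1 - J) * k * (1 + J) := by
    simp only [hc, star_mul, star_sub, star_add, star_one, hJsa.star_eq, hk.star_eq]
    noncomm_ring
  have hJc : J * c = c := by rw [hc, ← mul_assoc, ← mul_assoc, hJ1]
  have hJcs : J * star c = -star c := by
    rw [hcstar, ← mul_assoc, ← mul_assoc, hJ1', neg_mul, neg_mul]
  -- spectrum of c - star c is real
  have hk' : IsSelfAdjoint (c + star c) := by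
    rw [IsSelfAdjoint, star_add, star_star, add_comm]
  have hJk' : J * (c + star c) = c - star c := by rw [mul_add, hJc, hJcs]; noncomm_ring
  have hs_real : ∀ z ∈ spectrum ℂ (c - star c), z.im = 0 := by
    rw [← hJk']; exact hreal _ hk'
  -- I • (c - star c) is selfadjoint with spectrum ⊆ {0}
  set s := c - star c with hsdef
  have hsym : star s = -s := by rw [hsdef, star_sub, star_star]; noncomm_ring
  have hIs_sa : IsSelfAdjoint (Complex.I • s) := by
    have h1 : star (Complex.I • s) = (-Complex.I) • (star s) := by
      rw [star_smul]
      congr 1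
      simp [Complex.star_def, Complex.conj_I]
    rw [IsSelfAdjoint, h1, hsym, neg_smul, smul_neg, neg_neg]
  have hIs_spec : spectrum ℂ (Complex.I • s) ⊆ {0} := by
    intro z hz
    have hsm := spectrum.unit_smul_eq_smul s (Units.mk0 Complex.I Complex.I_ne_zero)
    rw [Units.smul_mk0] at hsm
    rw [hsm] at hz
    obtain ⟨w, hw, rfl⟩ := hz
    have h1 : (Complex.I • w).im = 0 := hIs_sa.im_eq_zero_of_mem_spectrum (by
      rw [hsm]; exact ⟨w, hw, rfl⟩)
    have h2 : w.im = 0 := hs_real w hw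
    have h3 : w = 0 := by
      apply Complex.ext
      · simpa [smul_eq_mul, Complex.mul_im, h2] using h1
      · exact h2
    simp [h3]
  have hs0 : s = 0 := by
    have := my_sa_eq_zero hIs_sa hIs_spec
    rcases smul_eq_zero.mp this with h | h
    · exact absurd h Complex.I_ne_zero
    · exact h
  have e3 : s = (J * k - k * J) + (J * k - k * J) := by
    rw [hsdef, hc, hcstar]; noncomm_ring
  rw [hs0] at e3
  rw [← sub_eq_zero]
  exact my_double_zero e3.symm

end Central

section Helpers3
variable {C : Type*} [CStarAlgebra C] [PartialOrder C] [StarOrderedRing C]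

lemma my_spec_empty {D : Type*} [Ring D] [Algebra ℂ D] [Subsingleton D] (c : D) :
    spectrum ℂ c = ∅ :=
  Set.eq_empty_of_forall_notMem fun _z hz =>
    (spectrum.notMem_iff.mpr (isUnit_of_subsingleton _)) hz

lemma my_sqrt_conj {u : C} (y : C) (hu : 0 ≤ u) (huu : IsUnit u) :
    spectrum ℂ (CFC.sqrt u * y * CFC.sqrt u) = spectrum ℂ (u * y) := by
  have hss : CFC.sqrt u * CFC.sqrt u = u := CFC.sqrt_mul_sqrt_self u hu
  have hsu : IsUnit (CFC.sqrt u) := my_isUnit_sqrt hu huu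
  rw [mul_assoc, my_swap hsu, mul_assoc, hss, my_swap huu]

end Helpers3
open scoped ComplexOrder in
/-- Let `φ` be a surjective map between the self-adjoint parts of unital
C*-algebras with `σ(φ(a)φ(b)) = σ(ab)` and set `T(x) = φ(1)·φ(x)`. Then for all positive
invertible `x, y`, the elements `T(x)` and `T(y)` are positive invertible,
`T(x⁻¹) = T(x)⁻¹`, and `σ(x^{-1/2} y x^{-1/2}) = σ(T(x)^{-1/2} T(y) T(x)^{-1/2})`. -/
theorem image_inv_and_spectrum_conj_of_spectrum_mul_eq {A B : Type*}
    [CStarAlgebra A] [CStarAlgebra B]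
    [PartialOrder A] [StarOrderedRing A] [PartialOrder B] [StarOrderedRing B]
    (φ : selfAdjoint A → selfAdjoint B) (hsurj : Function.Surjective φ)
    (hφ : ∀ a b : selfAdjoint A,
      spectrum ℂ ((φ a : B) * (φ b : B)) = spectrum ℂ ((a : A) * (b : A))) :
    ∀ x y : selfAdjoint A, 0 ≤ (x : A) → IsUnit (x : A) → 0 ≤ (y : A) → IsUnit (y : A) →
      (0 ≤ (φ 1 : B) * (φ x : B)) ∧ IsUnit ((φ 1 : B) * (φ x : B)) ∧
      (0 ≤ (φ 1 : B) * (φ y : B)) ∧ IsUnit ((φ 1 : B) * (φ y : B)) ∧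
      ((φ 1 : B) * (φ (⟨Ring.inverse (x : A), by
          rw [selfAdjoint.mem_iff, ← Ring.inverse_star, x.prop.star_eq]⟩ : selfAdjoint A) : B)
        = Ring.inverse ((φ 1 : B) * (φ x : B))) ∧
      spectrum ℂ (CFC.sqrt (Ring.inverse (x : A)) * (y : A) * CFC.sqrt (Ring.inverse (x : A)))
        = spectrum ℂ (CFC.sqrt (Ring.inverse ((φ 1 : B) * (φ x : B))) *
            ((φ 1 : B) * (φ y : B)) *
            CFC.sqrt (Ring.inverse ((φ 1 : B) * (φ x : B)))) := by
  intro x y hx hxu hy hyu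
  by_cases hB : Nontrivial B
  case neg =>
    -- both algebras are trivial
    have hBs : Subsingleton B := not_nontrivial_iff_subsingleton.mp hB
    have hAs : Subsingleton A := by
      by_contra h
      have hA : Nontrivial A := not_subsingleton_iff_nontrivial.mp h
      have h1 := hφ 1 1
      rw [my_spec_empty] at h1
      have h2 : spectrum ℂ ((1 : selfAdjoint A) * (1 : selfAdjoint A) : A) = {1} := by
        norm_num [spectrum.one_eq]
      rw [h2] at h1
      exact (Set.singleton_ne_empty _ h1.symm).elim
    refine ⟨le_of_eq (Subsingleton.elim _ _), isUnit_of_subsingleton _,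
      le_of_eq (Subsingleton.elim _ _), isUnit_of_subsingleton _,
      Subsingleton.elim _ _, ?_⟩
    rw [my_spec_empty, my_spec_empty]
  case pos =>
    have hA : Nontrivial A := by
      by_contra h
      have hAs : Subsingleton A := not_nontrivial_iff_subsingleton.mp h
      have h1 := hφ 1 1
      rw [my_spec_empty ((1 : selfAdjoint A) * (1 : selfAdjoint A) : A)] at h1
      exact ((spectrum.nonempty ((φ 1 : B) * (φ 1 : B))).ne_empty h1).elim
    set J : B := (φ 1 : B) with hJ
    have hJsa : IsSelfAdjoint J := (φ 1).prop
    have hJ2 : J * J = 1 := by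
      apply my_sa_eq_one (by rw [IsSelfAdjoint, star_mul, hJsa.star_eq])
      rw [hφ 1 1]
      norm_num [spectrum.one_eq]
    have hreal : ∀ k : B, IsSelfAdjoint k → ∀ z ∈ spectrum ℂ (J * k), z.im = 0 := by
      intro k hk z hz
      obtain ⟨b, hb⟩ := hsurj ⟨k, hk⟩
      have hbk : (φ b : B) = k := by rw [hb]
      rw [← hbk, hφ 1 b] at hz
      simp only [selfAdjoint.val_one, one_mul] at hz
      exact b.prop.im_eq_zero_of_mem_spectrum hz
    have hcomm : ∀ b : selfAdjoint A, J * (φ b : B) = (φ b : B) * J :=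
      fun b => my_central hJsa hJ2 hreal (φ b).prop
    -- main claim
    have claim : ∀ w : selfAdjoint A, 0 ≤ (w : A) → IsUnit (w : A) →
        (0 ≤ J * (φ w : B)) ∧ IsUnit (J * (φ w : B)) := by
      intro w hw hwu
      have hTsa : IsSelfAdjoint (J * (φ w : B)) := by
        rw [IsSelfAdjoint, star_mul, hJsa.star_eq, (φ w).prop.star_eq, hcomm w]
      have hTspec : spectrum ℂ (J * (φ w : B)) = spectrum ℂ (w : A) := by
        have := hφ 1 w
        simpa only [selfAdjoint.val_one, one_mul] using this
      constructor
      · apply my_nonneg_of_spec hTsa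
        intro z hz
        rw [hTspec] at hz
        exact (Complex.le_def.mp (spectrum_nonneg_of_nonneg hw hz)).1
      · apply spectrum.isUnit_of_zero_notMem (R := ℂ)
        rw [hTspec]
        exact spectrum.zero_notMem ℂ hwu
    -- the inverse element
    set x' : selfAdjoint A := ⟨Ring.inverse (x : A), by
        rw [selfAdjoint.mem_iff, ← Ring.inverse_star, x.prop.star_eq]⟩ with hx'
    have hrinv : Ring.inverse (x : A) = ((hxu.unit⁻¹ : Aˣ) : A) := by
      conv_lhs => rw [← hxu.unit_spec]
      exact Ring.inverse_unit hxu.unit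
    have hx'u : IsUnit (x' : A) := by
      rw [hx']
      show IsUnit (Ring.inverse (x : A))
      exact hrinv ▸ (hxu.unit⁻¹).isUnit
    have hx'pos : 0 ≤ (x' : A) := by
      apply my_nonneg_of_spec x'.prop
      intro z hz
      have h1 : z ∈ spectrum ℂ ((hxu.unit⁻¹ : Aˣ) : A) := by
        rw [← hrinv]; exact hz
      rw [← spectrum.map_inv, Set.mem_inv] at h1
      rw [hxu.unit_spec] at h1
      have h0 : (0 : ℂ) ≤ z⁻¹ := spectrum_nonneg_of_nonneg hx h1
      obtain ⟨hre, him⟩ := Complex.le_def.mp h0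
      simp only [Complex.zero_re, Complex.zero_im] at hre him
      have hw : z⁻¹ = (((z⁻¹).re : ℝ) : ℂ) := by
        apply Complex.ext <;> simp [← him]
      have hzz : z = ((((z⁻¹).re)⁻¹ : ℝ) : ℂ) := by
        rw [Complex.ofReal_inv, ← hw, inv_inv]
      rw [hzz, Complex.ofReal_re]
      exact inv_nonneg.mpr hre
    obtain ⟨hTx, hTxu⟩ := claim x hx hxu
    obtain ⟨hTy, hTyu⟩ := claim y hy hyu
    obtain ⟨hTx', hTx'u⟩ := claim x' hx'pos hx'u
    -- collapse products
    have hcollapse : ∀ a b : selfAdjoint A,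
        (J * (φ a : B)) * (J * (φ b : B)) = (φ a : B) * (φ b : B) := by
      intro a b
      rw [hcomm a, mul_assoc, ← mul_assoc J J, hJ2, one_mul]
    have hprod : (J * (φ x' : B)) * (J * (φ x : B)) = 1 := by
      apply my_pos_inv_unique hTx' hTx'u hTx hTxu
      rw [hcollapse, hφ x' x]
      show spectrum ℂ (Ring.inverse (x : A) * (x : A)) = {1}
      rw [Ring.inverse_mul_cancel _ hxu, spectrum.one_eq]
    have hprod' : (J * (φ x : B)) * (J * (φ x' : B)) = 1 := by
      apply my_pos_inv_unique hTx hTxu hTx' hTx'u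
      rw [hcollapse, hφ x x']
      show spectrum ℂ ((x : A) * Ring.inverse (x : A)) = {1}
      rw [Ring.mul_inverse_cancel _ hxu, spectrum.one_eq]
    have hinv : J * (φ x' : B) = Ring.inverse (J * (φ x : B)) := by
      have h2 : Ring.inverse (J * (φ x : B)) = ((hTxu.unit⁻¹ : Bˣ) : B) := by
        conv_lhs => rw [← hTxu.unit_spec]
        exact Ring.inverse_unit hTxu.unit
      rw [h2]
      exact Units.eq_inv_of_mul_eq_one_left (by rw [hTxu.unit_spec]; exact hprod')
    refine ⟨hTx, hTxu, hTy, hTyu, hinv, ?_⟩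
    have hL : spectrum ℂ (CFC.sqrt (Ring.inverse (x : A)) * (y : A) *
        CFC.sqrt (Ring.inverse (x : A))) = spectrum ℂ ((x' : A) * (y : A)) :=
      my_sqrt_conj (y : A) hx'pos hx'u
    have hR : spectrum ℂ (CFC.sqrt (Ring.inverse (J * (φ x : B))) * (J * (φ y : B)) *
          CFC.sqrt (Ring.inverse (J * (φ x : B))))
        = spectrum ℂ (Ring.inverse (J * (φ x : B)) * (J * (φ y : B))) :=
      my_sqrt_conj (J * (φ y : B)) (hinv ▸ hTx') (hinv ▸ hTx'u)
    rw [hL, hR, ← hinv, hcollapse, hφ x' y]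
end
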